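/- arXiv:2402.11402 — 5 statements merged into one kernel-verified Lean document; each statement's English description precedes it below -/
import Mathlib

section
/- Let N₀ > 5 and let φ : ℝ → ℝ be nonnegative, continuously differentiable on [1,∞), with |φ(s)| + |φ'(s)| ≤ C s^{-N₀} for all s ≥ 1. Then the following four quantities are equal: ∫_{ℝ³} (1 + (2/3)|v|²)(1+|v|²)^{-3/2} φ(⟨v⟩) dv = -(1/3) ∫_{ℝ³} |v̂|² φ'(⟨v⟩) dv = -∫_{-1}^{1} u² κ(u) du = -(1/2) ∫_{-1}^{1} q(u) du. -/
open MeasureTheory Real Set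

noncomputable section

/-- `ℝ³` as a Euclidean space. -/
abbrev E3 := EuclideanSpace ℝ (Fin 3)

/-- The relativistic energy `⟨v⟩ = √(1+|v|²)`. -/
def jap (v : E3) : ℝ := Real.sqrt (1 + ‖v‖ ^ 2)

/-- The relativistic velocity `v̂ = v/⟨v⟩`. -/
def vhat (v : E3) : E3 := (jap v)⁻¹ • v

/-- `κ(u) = 2π ∫_{1/√(1-u²)}^{∞} φ'(s) s² ds`. -/
def kappaFn (φ' : ℝ → ℝ) (u : ℝ) : ℝ :=
  2 * Real.pi * ∫ s in Set.Ioi (1 / Real.sqrt (1 - u ^ 2)), φ' s * s ^ 2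

/-- `q(u) = -4π(1-u²) ∫_{1/√(1-u²)}^{∞} φ(s) s ds`. -/
def qFn (φ : ℝ → ℝ) (u : ℝ) : ℝ :=
  -(4 * Real.pi) * (1 - u ^ 2) * ∫ s in Set.Ioi (1 / Real.sqrt (1 - u ^ 2)), φ s * s

lemma gamma52 : Real.Gamma ((3:ℕ)/2 + 1) = 3/4 * Real.sqrt π := by
  have h1 : ((3:ℕ)/2 + 1 : ℝ) = 3/2 + 1 := by norm_num
  rw [h1, Real.Gamma_add_one (by norm_num)]
  have h2 : (3/2 : ℝ) = 1/2 + 1 := by norm_num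
  rw [h2, Real.Gamma_add_one (by norm_num), Real.Gamma_one_half_eq]
  ring

lemma vol_ball : (volume (Metric.ball (0:E3) 1)).toReal = 4/3 * π := by
  rw [EuclideanSpace.volume_ball]
  have hcard : Fintype.card (Fin 3) = 3 := by simp
  rw [hcard, gamma52]
  have hπ : (0:ℝ) < Real.sqrt π := Real.sqrt_pos.2 Real.pi_pos
  rw [ENNReal.toReal_mul]
  rw [ENNReal.toReal_pow, ENNReal.toReal_ofReal (by norm_num), ENNReal.toReal_ofReal (by positivity)]
  rw [one_pow, one_mul]
  rw [show Real.sqrt π ^ 3 = π * Real.sqrt π by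
    rw [pow_succ, pow_two, Real.mul_self_sqrt Real.pi_pos.le]]
  field_simp

lemma sph (f : ℝ → ℝ) :
    ∫ v : E3, f ‖v‖ = (4 * π) * ∫ r in Set.Ioi (0:ℝ), r ^ 2 * f r := by
  rw [MeasureTheory.integral_fun_norm_addHaar (volume : Measure E3) f]
  have hdim : Module.finrank ℝ E3 = 3 := finrank_euclideanSpace_fin
  rw [hdim, measureReal_def, vol_ball]
  simp only [smul_eq_mul, nsmul_eq_mul]
  rw [← integral_const_mul, ← integral_const_mul, ← integral_const_mul]
  apply setIntegral_congr_fun measurableSet_Ioi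
  intro r hr
  norm_num
  ring

lemma img_sqrt : (fun r : ℝ => Real.sqrt (1 + r^2)) '' Ioi 0 = Ioi 1 := by
  ext s
  constructor
  · rintro ⟨r, hr, rfl⟩
    have : (1:ℝ) < 1 + r^2 := by nlinarith [hr.out]
    simpa using (Real.lt_sqrt (by norm_num)).2 (by simpa using this)
  · intro hs
    have hs1 : (1:ℝ) < s := hs
    refine ⟨Real.sqrt (s^2 - 1), ?_, ?_⟩
    · exact Real.sqrt_pos.2 (by nlinarith)
    · show Real.sqrt (1 + Real.sqrt (s^2-1) ^ 2) = s
      rw [Real.sq_sqrt (by nlinarith : (0:ℝ) ≤ s^2 - 1)]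
      rw [show 1 + (s^2 - 1) = s^2 by ring, Real.sqrt_sq (by linarith)]

lemma subst (G : ℝ → ℝ) :
    ∫ s in Ioi (1:ℝ), (s * Real.sqrt (s^2 - 1)) * G s
      = ∫ r in Ioi (0:ℝ), r^2 * G (Real.sqrt (1 + r^2)) := by
  have hderiv : ∀ r ∈ Ioi (0:ℝ), HasDerivWithinAt (fun r : ℝ => Real.sqrt (1 + r^2))
      (r / Real.sqrt (1 + r^2)) (Ioi 0) r := by
    intro r hr
    have h1 : HasDerivAt (fun r : ℝ => 1 + r^2) (2*r) r := by
      simpa using ((hasDerivAt_pow 2 r).const_add 1)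
    have h2 : (1 + r^2 : ℝ) ≠ 0 := by positivity
    have := (Real.hasDerivAt_sqrt h2).comp r h1
    refine this.hasDerivWithinAt.congr_deriv ?_
    field_simp
  have hinj : InjOn (fun r : ℝ => Real.sqrt (1 + r^2)) (Ioi 0) := by
    intro a ha b hb hab
    simp only at hab
    have h1 : (0:ℝ) ≤ 1 + a^2 := by positivity
    have := congrArg (fun x : ℝ => x^2) hab
    simp only [Real.sq_sqrt h1, Real.sq_sqrt (by positivity : (0:ℝ) ≤ 1 + b^2)] at this
    have ha' := ha.out; have hb' := hb.out
    nlinarith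
  have := integral_image_eq_integral_abs_deriv_smul measurableSet_Ioi hderiv hinj
    (fun s => (s * Real.sqrt (s^2 - 1)) * G s)
  rw [img_sqrt] at this
  rw [this]
  apply setIntegral_congr_fun measurableSet_Ioi
  intro r hr
  have hr0 : (0:ℝ) < r := hr
  have h1 : (0:ℝ) < Real.sqrt (1 + r^2) := Real.sqrt_pos.2 (by positivity)
  simp only [smul_eq_mul]
  rw [abs_of_pos (by positivity), Real.sq_sqrt (by positivity : (0:ℝ) ≤ 1 + r^2)]
  rw [show 1 + r^2 - 1 = r^2 by ring, Real.sqrt_sq hr0.le]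
  field_simp

lemma int_decay {h : ℝ → ℝ} {D p : ℝ} (hp : p < -1)
    (hmeas : AEStronglyMeasurable h (volume.restrict (Ioi 1)))
    (hb : ∀ s : ℝ, 1 < s → |h s| ≤ D * s ^ p) :
    IntegrableOn h (Ioi 1) := by
  have hint : IntegrableOn (fun s : ℝ => D * s ^ p) (Ioi 1) :=
    (integrableOn_Ioi_rpow_of_lt hp one_pos).const_mul D
  refine Integrable.mono' hint hmeas ?_
  filter_upwards [ae_restrict_mem measurableSet_Ioi] with s hs
  exact hb s hs

-- the weight g and its derivative
def gW (s : ℝ) : ℝ := Real.sqrt (s^2 - 1) ^ 3 / s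
def gW' (s : ℝ) : ℝ := 3 * Real.sqrt (s^2 - 1) - Real.sqrt (s^2 - 1) ^ 3 / s^2

lemma gW_hasDeriv {s : ℝ} (hs : 1 < s) : HasDerivAt gW (gW' s) s := by
  have hs0 : (0:ℝ) < s := by linarith
  have hpos : (0:ℝ) < s^2 - 1 := by nlinarith
  have hsq : (0:ℝ) < Real.sqrt (s^2 - 1) := Real.sqrt_pos.2 hpos
  have h1 : HasDerivAt (fun s : ℝ => s^2 - 1) (2*s) s := by
    simpa using ((hasDerivAt_pow 2 s).sub_const 1)
  have h2 := (Real.hasDerivAt_sqrt hpos.ne').comp s h1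
  have h3 := (h2.pow 3)
  have h4 : HasDerivAt (fun s : ℝ => s⁻¹) (-(s^2)⁻¹) s := by
    simpa using hasDerivAt_inv hs0.ne'
  have h5 := h3.mul h4
  have : gW = fun s : ℝ => Real.sqrt (s^2 - 1) ^ 3 * s⁻¹ := by
    funext x; simp [gW, div_eq_mul_inv]
  rw [this]
  refine h5.congr_deriv ?_
  have hsqsq : Real.sqrt (s^2-1) ^ 2 = s^2 - 1 := Real.sq_sqrt hpos.le
  simp only [gW']
  field_simp
  simp only [Function.comp_apply, Pi.pow_apply]
  push_cast
  ring

lemma sqrt_le_self {s : ℝ} (hs : 1 ≤ s) : Real.sqrt (s^2 - 1) ≤ s := by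
  calc Real.sqrt (s^2 - 1) ≤ Real.sqrt (s^2) := Real.sqrt_le_sqrt (by nlinarith)
  _ = s := Real.sqrt_sq (by linarith)

lemma gW_nonneg {s : ℝ} (hs : 1 ≤ s) : 0 ≤ gW s := by
  unfold gW; positivity

lemma gW_abs {s : ℝ} (hs : 1 ≤ s) : |gW s| ≤ s^2 := by
  rw [abs_of_nonneg (gW_nonneg hs)]
  unfold gW
  rw [div_le_iff₀ (by linarith)]
  calc Real.sqrt (s^2-1)^3 ≤ s^3 :=
      pow_le_pow_left₀ (Real.sqrt_nonneg _) (sqrt_le_self hs) 3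
  _ = s^2 * s := by ring

lemma gW'_abs {s : ℝ} (hs : 1 ≤ s) : |gW' s| ≤ 4 * s^2 := by
  have h0 : (0:ℝ) < s := by linarith
  have h1 : Real.sqrt (s^2-1) ≤ s := sqrt_le_self hs
  have h2 : Real.sqrt (s^2-1)^3 / s^2 ≤ s := by
    rw [div_le_iff₀ (by positivity)]
    calc Real.sqrt (s^2-1)^3 ≤ s^3 := pow_le_pow_left₀ (Real.sqrt_nonneg _) h1 3
    _ = s * s^2 := by ring
  have h3 : (0:ℝ) ≤ Real.sqrt (s^2-1)^3 / s^2 := by positivity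
  have h4 : (0:ℝ) ≤ Real.sqrt (s^2-1) := Real.sqrt_nonneg _
  rw [abs_le]
  constructor <;> unfold gW' <;> nlinarith

lemma gW_contAt {s : ℝ} (hs : 1 ≤ s) : ContinuousAt gW s := by
  apply ContinuousAt.div
  · exact ((Real.continuous_sqrt.comp (by continuity)).pow 3).continuousAt
  · exact continuous_id.continuousAt
  · intro h; rw [h] at hs; linarith

lemma gW'_contOn : ContinuousOn gW' (Ioi 1) := by
  apply ContinuousOn.sub
  · exact (continuous_const.mul (Real.continuous_sqrt.comp (by continuity))).continuousOn
  · exact ContinuousOn.div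
      ((Real.continuous_sqrt.comp (by continuity)).pow 3).continuousOn
      (continuous_pow 2).continuousOn
      (fun s hs => by have : (1:ℝ) < s := hs; positivity)

section Main
variable {N₀ C : ℝ} (hN₀ : 5 < N₀) {φ φ' : ℝ → ℝ}
  (hderiv : ∀ s : ℝ, 1 ≤ s → HasDerivAt φ (φ' s) s)
  (hcont : ContinuousOn φ' (Set.Ici 1))
  (hdecay : ∀ s : ℝ, 1 ≤ s → |φ s| + |φ' s| ≤ C * s ^ (-N₀))

include hdecay in
lemma phi_bound : ∀ s : ℝ, 1 ≤ s → |φ s| ≤ C * s ^ (-N₀) := fun s hs => by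
  have := hdecay s hs; have := abs_nonneg (φ' s); linarith

include hdecay in
lemma phi'_bound : ∀ s : ℝ, 1 ≤ s → |φ' s| ≤ C * s ^ (-N₀) := fun s hs => by
  have := hdecay s hs; have := abs_nonneg (φ s); linarith

lemma pow_mul_rpow {s : ℝ} (hs : 1 ≤ s) (p : ℝ) :
    s ^ p * s ^ (2:ℕ) = s ^ (p + 2) := by
  rw [← Real.rpow_natCast s 2, ← Real.rpow_add (by linarith)]
  norm_num

include hderiv in
lemma phi_contOn : ContinuousOn φ (Ici 1) :=
  fun s hs => ((hderiv s hs).continuousAt).continuousWithinAt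

include hN₀ hderiv hcont hdecay in
lemma int_phi'_gW : IntegrableOn (fun s => φ' s * gW s) (Ioi 1) := by
  apply int_decay (D := C) (p := -N₀ + 2) (by linarith)
  · exact ((hcont.mono (Ioi_subset_Ici le_rfl)).mul
      (fun s hs => (gW_contAt (le_of_lt hs)).continuousWithinAt)).aestronglyMeasurable
        measurableSet_Ioi
  · intro s hs
    have hs1 : (1:ℝ) ≤ s := hs.le
    rw [abs_mul, ← pow_mul_rpow hs1 (-N₀), ← mul_assoc]
    exact mul_le_mul (phi'_bound hdecay s hs1) (gW_abs hs1) (abs_nonneg _)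
      ((abs_nonneg _).trans (phi'_bound hdecay s hs1))

include hN₀ hderiv hdecay in
lemma int_phi_gW' : IntegrableOn (fun s => φ s * gW' s) (Ioi 1) := by
  apply int_decay (D := 4 * C) (p := -N₀ + 2) (by linarith)
  · exact (((phi_contOn hderiv).mono (Ioi_subset_Ici le_rfl)).mul
      gW'_contOn).aestronglyMeasurable measurableSet_Ioi
  · intro s hs
    have hs1 : (1:ℝ) ≤ s := hs.le
    rw [abs_mul, ← pow_mul_rpow hs1 (-N₀)]
    calc |φ s| * |gW' s| ≤ (C * s ^ (-N₀)) * (4 * s^2) :=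
        mul_le_mul (phi_bound hdecay s hs1) (gW'_abs hs1) (abs_nonneg _)
          ((abs_nonneg _).trans (phi_bound hdecay s hs1))
    _ = 4 * C * (s ^ (-N₀) * s ^ 2) := by ring

include hN₀ hdecay in
lemma tendsto_phi_gW : Filter.Tendsto (fun s => φ s * gW s) Filter.atTop (nhds 0) := by
  apply squeeze_zero_norm' (a := fun s => C * s ^ (-N₀ + 2))
  · filter_upwards [Filter.eventually_ge_atTop (1:ℝ)] with s hs
    rw [Real.norm_eq_abs, abs_mul, ← pow_mul_rpow hs (-N₀), ← mul_assoc]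
    exact mul_le_mul (phi_bound hdecay s hs) (gW_abs hs) (abs_nonneg _)
      ((abs_nonneg _).trans (phi_bound hdecay s hs))
  · have h := tendsto_rpow_neg_atTop (y := N₀ - 2) (by linarith)
    have : (fun s : ℝ => C * s ^ (-N₀ + 2)) = fun s : ℝ => C * s ^ (-(N₀ - 2)) := by
      funext s; ring_nf
    rw [this]
    simpa using h.const_mul C

include hN₀ hderiv hcont hdecay in
lemma ibp : ∫ s in Ioi (1:ℝ), φ' s * gW s = - ∫ s in Ioi (1:ℝ), φ s * gW' s := by
  have hD : ∀ x ∈ Ioi (1:ℝ), HasDerivAt (fun s => φ s * gW s)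
      (φ' x * gW x + φ x * gW' x) x :=
    fun x hx => (hderiv x hx.out.le).mul (gW_hasDeriv hx)
  have hint : IntegrableOn (fun s => φ' s * gW s + φ s * gW' s) (Ioi 1) :=
    (int_phi'_gW hN₀ hderiv hcont hdecay).add (int_phi_gW' hN₀ hderiv hdecay)
  have hc1 : ContinuousWithinAt (fun s => φ s * gW s) (Ici 1) 1 :=
    (((hderiv 1 le_rfl).continuousAt).mul (gW_contAt le_rfl)).continuousWithinAt
  have key := integral_Ioi_of_hasDerivAt_of_tendsto hc1 hD hint (tendsto_phi_gW hN₀ hdecay)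
  have hgW1 : gW 1 = 0 := by simp [gW]
  rw [hgW1] at key
  simp only [mul_zero, sub_zero, zero_sub, neg_zero] at key
  rw [integral_add (int_phi'_gW hN₀ hderiv hcont hdecay) (int_phi_gW' hN₀ hderiv hdecay)] at key
  linarith

end Main

def aFn (s : ℝ) : ℝ := Real.sqrt (s^2 - 1) / s

lemma cFn_ge_one {u : ℝ} (hu : u ∈ Ioo (-1:ℝ) 1) : 1 ≤ 1 / Real.sqrt (1 - u^2) := by
  have h1 : (0:ℝ) < 1 - u^2 := by nlinarith [hu.1, hu.2]
  have h2 : Real.sqrt (1 - u^2) ≤ 1 := Real.sqrt_le_one.2 (by nlinarith)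
  have h3 : (0:ℝ) < Real.sqrt (1 - u^2) := Real.sqrt_pos.2 h1
  exact one_le_one_div h3 h2

lemma aFn_pos {s : ℝ} (hs : 1 < s) : 0 < aFn s := by
  unfold aFn
  have : (0:ℝ) < Real.sqrt (s^2-1) := Real.sqrt_pos.2 (by nlinarith)
  positivity

lemma aFn_lt_one {s : ℝ} (hs : 1 < s) : aFn s < 1 := by
  unfold aFn
  rw [div_lt_one (by linarith)]
  calc Real.sqrt (s^2 - 1) < Real.sqrt (s^2) := Real.sqrt_lt_sqrt (by nlinarith) (by nlinarith)
  _ = s := Real.sqrt_sq (by linarith)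

lemma aFn_sq {s : ℝ} (hs : 1 < s) : aFn s ^ 2 = (s^2 - 1) / s^2 := by
  unfold aFn
  rw [div_pow, Real.sq_sqrt (by nlinarith)]

lemma region_eq : {p : ℝ×ℝ | p.1 ∈ Ioo (-1:ℝ) 1 ∧ 1 / Real.sqrt (1 - p.1^2) < p.2}
    = {p : ℝ×ℝ | 1 < p.2 ∧ p.1 ∈ Ioo (-(aFn p.2)) (aFn p.2)} := by
  ext ⟨u, s⟩
  simp only [Set.mem_setOf_eq, Set.mem_Ioo]
  constructor
  · rintro ⟨hu, hc⟩
    have h1 : (0:ℝ) < 1 - u^2 := by nlinarith [hu.1, hu.2]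
    have h3 : (0:ℝ) < Real.sqrt (1 - u^2) := Real.sqrt_pos.2 h1
    have hsq : Real.sqrt (1-u^2)^2 = 1 - u^2 := Real.sq_sqrt h1.le
    have hs1 : 1 < s := lt_of_le_of_lt (cFn_ge_one hu) hc
    have hmul : 1 < s * Real.sqrt (1 - u^2) := by
      rw [div_lt_iff₀ h3] at hc; linarith
    have hsq2 : 1 < s^2 * (1 - u^2) := by nlinarith
    have hua : u^2 < aFn s ^ 2 := by
      rw [aFn_sq hs1, lt_div_iff₀ (by nlinarith)]
      nlinarith
    have ha : 0 < aFn s := aFn_pos hs1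
    refine ⟨hs1, ?_, ?_⟩ <;> nlinarith [hua, ha]
  · rintro ⟨hs, hu1, hu2⟩
    have ha : 0 < aFn s := aFn_pos hs
    have ha1 : aFn s < 1 := aFn_lt_one hs
    have hua : u^2 < aFn s ^ 2 := sq_lt_sq' hu1 hu2
    have hu2' : u^2 < (s^2-1)/s^2 := by rwa [aFn_sq hs] at hua
    have hs0 : (0:ℝ) < s := by linarith
    have h1 : (0:ℝ) < 1 - u^2 := by
      have : (s^2-1)/s^2 < 1 := by rw [div_lt_one (by positivity)]; linarith
      nlinarith
    have h3 : (0:ℝ) < Real.sqrt (1 - u^2) := Real.sqrt_pos.2 h1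
    have hsq : Real.sqrt (1-u^2)^2 = 1 - u^2 := Real.sq_sqrt h1.le
    have key : 1 < s^2 * (1 - u^2) := by
      rw [lt_div_iff₀ (by positivity : (0:ℝ) < s^2)] at hu2'
      nlinarith
    refine ⟨⟨by nlinarith, by nlinarith⟩, ?_⟩
    rw [div_lt_iff₀ h3]
    nlinarith [mul_pos hs0 h3]

lemma fubini_key {h w : ℝ → ℝ} (hw : Continuous w)
    (hwb : ∀ u : ℝ, u ∈ Ioo (-1:ℝ) 1 → |w u| ≤ 2)
    (hint : IntegrableOn h (Ioi 1)) :
    ∫ u in Ioo (-1:ℝ) 1, w u * ∫ s in Ioi (1 / Real.sqrt (1 - u^2)), h s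
      = ∫ s in Ioi (1:ℝ), (∫ u in Ioo (-(aFn s)) (aFn s), w u) * h s := by
  set h' : ℝ → ℝ := (Ioi (1:ℝ)).indicator h with hh'def
  have hh'int : Integrable h' := (integrable_indicator_iff measurableSet_Ioi).2 hint
  set R : Set (ℝ×ℝ) := {p : ℝ×ℝ | p.1 ∈ Ioo (-1:ℝ) 1 ∧ 1 / Real.sqrt (1 - p.1^2) < p.2} with hRdef
  have hRmeas : MeasurableSet R := by
    rw [hRdef]
    have h1 : MeasurableSet {p : ℝ×ℝ | p.1 ∈ Ioo (-1:ℝ) 1} :=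
      measurable_fst measurableSet_Ioo
    have h2 : MeasurableSet {p : ℝ×ℝ | 1 / Real.sqrt (1 - p.1^2) < p.2} := by
      have hc : Continuous fun u : ℝ => Real.sqrt (1 - u^2) :=
        Real.continuous_sqrt.comp (continuous_const.sub (continuous_pow 2))
      have hm : Measurable fun p : ℝ×ℝ => 1 / Real.sqrt (1 - p.1^2) :=
        measurable_const.div (hc.measurable.comp measurable_fst)
      exact measurableSet_lt hm measurable_snd
    rw [Set.setOf_and]
    exact h1.inter h2
  set F : ℝ×ℝ → ℝ := R.indicator (fun p => w p.1 * h' p.2) with hFdef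
  have hFmeas : AEStronglyMeasurable F (volume.prod volume) := by
    apply AEStronglyMeasurable.indicator _ hRmeas
    have h1 : AEMeasurable h' volume := hh'int.aemeasurable
    have h2 : AEMeasurable (fun p : ℝ×ℝ => h' p.2) (volume.prod volume) :=
      h1.comp_quasiMeasurePreserving MeasureTheory.Measure.quasiMeasurePreserving_snd
    exact ((hw.measurable.comp measurable_fst).aemeasurable.mul h2).aestronglyMeasurable
  have hFint : Integrable F (volume.prod volume) := by
    apply Integrable.mono' (g := fun p : ℝ×ℝ =>
      ((Ioo (-1:ℝ) 1).indicator (fun _ => (2:ℝ)) p.1) * |h' p.2|) _ hFmeas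
    · filter_upwards with p
      rw [Real.norm_eq_abs, hFdef]
      by_cases hp : p ∈ R
      · rw [Set.indicator_of_mem hp, abs_mul,
          Set.indicator_of_mem (hp.1 : p.1 ∈ Ioo (-1:ℝ) 1)]
        exact mul_le_mul_of_nonneg_right (hwb p.1 hp.1) (abs_nonneg _)
      · rw [Set.indicator_of_notMem hp, abs_zero]
        exact mul_nonneg (Set.indicator_nonneg (fun _ _ => by norm_num) _) (abs_nonneg _)
    · exact Integrable.mul_prod
        ((integrable_indicator_iff measurableSet_Ioo).2 (integrableOn_const (by simp)))
        hh'int.abs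
  have swap := MeasureTheory.integral_integral_swap (f := fun u s => F (u, s))
    (μ := volume) (ν := volume) hFint
  -- compute the left iterated integral
  have hL : ∀ u : ℝ, (∫ s, F (u, s)) =
      (Ioo (-1:ℝ) 1).indicator (fun u => w u * ∫ s in Ioi (1 / Real.sqrt (1 - u^2)), h s) u := by
    intro u
    by_cases hu : u ∈ Ioo (-1:ℝ) 1
    · rw [Set.indicator_of_mem hu]
      have hfs : (fun s => F (u, s)) =
          (Ioi (1 / Real.sqrt (1 - u^2))).indicator (fun s => w u * h s) := by
        funext s
        by_cases hscond : s ∈ Ioi (1 / Real.sqrt (1 - u^2))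
        · have hmemR : (u, s) ∈ R := ⟨hu, hscond⟩
          rw [Set.indicator_of_mem hscond, hFdef, Set.indicator_of_mem hmemR]
          have : s ∈ Ioi (1:ℝ) := lt_of_le_of_lt (cFn_ge_one hu) hscond
          simp only [hh'def, Set.indicator_of_mem this]
        · have hmemR : (u, s) ∉ R := fun hc => hscond hc.2
          rw [Set.indicator_of_notMem hscond, hFdef, Set.indicator_of_notMem hmemR]
      rw [hfs, integral_indicator measurableSet_Ioi, integral_const_mul]
    · rw [Set.indicator_of_notMem hu]
      have hfs : (fun s => F (u, s)) = fun _ => 0 := by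
        funext s
        have hmemR : (u, s) ∉ R := fun hc => hu hc.1
        rw [hFdef, Set.indicator_of_notMem hmemR]
      rw [hfs, integral_zero]
  -- compute the right iterated integral
  have hR : ∀ s : ℝ, (∫ u, F (u, s)) =
      (Ioi (1:ℝ)).indicator (fun s => (∫ u in Ioo (-(aFn s)) (aFn s), w u) * h s) s := by
    intro s
    by_cases hs : s ∈ Ioi (1:ℝ)
    · rw [Set.indicator_of_mem hs]
      have hfs : (fun u => F (u, s)) =
          (Ioo (-(aFn s)) (aFn s)).indicator (fun u => w u * h s) := by
        funext u
        have hiff : (u, s) ∈ R ↔ u ∈ Ioo (-(aFn s)) (aFn s) := by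
          rw [hRdef, region_eq]
          exact ⟨fun hp => hp.2, fun hp => ⟨hs, hp⟩⟩
        by_cases hucond : u ∈ Ioo (-(aFn s)) (aFn s)
        · rw [Set.indicator_of_mem hucond, hFdef, Set.indicator_of_mem (hiff.2 hucond)]
          simp only [hh'def, Set.indicator_of_mem (hs : s ∈ Ioi (1:ℝ))]
        · rw [Set.indicator_of_notMem hucond, hFdef,
            Set.indicator_of_notMem (fun hc => hucond (hiff.1 hc))]
      rw [hfs, integral_indicator measurableSet_Ioo, integral_mul_const]
    · rw [Set.indicator_of_notMem hs]
      have hfs : (fun u => F (u, s)) = fun _ => 0 := by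
        funext u
        have hmemR : (u, s) ∉ R := by
          rw [hRdef, region_eq]
          exact fun hc => hs hc.1
        rw [hFdef, Set.indicator_of_notMem hmemR]
      rw [hfs, integral_zero]
  calc ∫ u in Ioo (-1:ℝ) 1, w u * ∫ s in Ioi (1 / Real.sqrt (1 - u^2)), h s
      = ∫ u, (Ioo (-1:ℝ) 1).indicator
          (fun u => w u * ∫ s in Ioi (1 / Real.sqrt (1 - u^2)), h s) u :=
        (integral_indicator measurableSet_Ioo).symm
    _ = ∫ u, ∫ s, F (u, s) := by
        congr 1; funext u; exact (hL u).symm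
    _ = ∫ s, ∫ u, F (u, s) := swap
    _ = ∫ s, (Ioi (1:ℝ)).indicator (fun s => (∫ u in Ioo (-(aFn s)) (aFn s), w u) * h s) s := by
        congr 1; funext s; exact hR s
    _ = ∫ s in Ioi (1:ℝ), (∫ u in Ioo (-(aFn s)) (aFn s), w u) * h s :=
        integral_indicator measurableSet_Ioi

lemma rpow_neg32 {x : ℝ} (hx : 0 < x) : x ^ (-(3:ℝ)/2) = (Real.sqrt x ^ 3)⁻¹ := by
  rw [show (-(3:ℝ)/2) = -(3/2) by ring, Real.rpow_neg hx.le]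
  congr 1
  rw [show ((3:ℝ)/2) = (1/2) * (3:ℕ) by norm_num, Real.rpow_mul hx.le,
    Real.rpow_natCast, Real.sqrt_eq_rpow]

lemma int_Ioo_sq {a : ℝ} (ha : 0 < a) :
    ∫ u in Ioo (-a) a, u ^ 2 = 2/3 * a^3 := by
  rw [← MeasureTheory.integral_Ioc_eq_integral_Ioo,
    ← intervalIntegral.integral_of_le (by linarith : -a ≤ a), integral_pow]
  norm_num
  ring

lemma int_Ioo_one_sub_sq {a : ℝ} (ha : 0 < a) :
    ∫ u in Ioo (-a) a, (1 - u ^ 2) = 2*a - 2/3 * a^3 := by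
  rw [← MeasureTheory.integral_Ioc_eq_integral_Ioo,
    ← intervalIntegral.integral_of_le (by linarith : -a ≤ a)]
  rw [intervalIntegral.integral_sub intervalIntegrable_const (intervalIntegral.intervalIntegrable_pow 2),
    integral_pow, intervalIntegral.integral_const]
  norm_num
  ring

section Main2
variable {N₀ C : ℝ} (hN₀ : 5 < N₀) {φ φ' : ℝ → ℝ}
  (hderiv : ∀ s : ℝ, 1 ≤ s → HasDerivAt φ (φ' s) s)
  (hcont : ContinuousOn φ' (Set.Ici 1))
  (hdecay : ∀ s : ℝ, 1 ≤ s → |φ s| + |φ' s| ≤ C * s ^ (-N₀))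

include hN₀ hcont hdecay in
lemma int_phi'_sq : IntegrableOn (fun s => φ' s * s ^ 2) (Ioi 1) := by
  apply int_decay (D := C) (p := -N₀ + 2) (by linarith)
  · exact ((hcont.mono (Ioi_subset_Ici le_rfl)).mul
      (continuous_pow 2).continuousOn).aestronglyMeasurable measurableSet_Ioi
  · intro s hs
    have hs1 : (1:ℝ) ≤ s := hs.le
    rw [abs_mul, ← pow_mul_rpow hs1 (-N₀), ← mul_assoc]
    have h2 : |s ^ 2| = s ^ 2 := abs_of_nonneg (by positivity)
    rw [h2]
    exact mul_le_mul_of_nonneg_right (phi'_bound hdecay s hs1) (by positivity)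

include hN₀ hderiv hdecay in
lemma int_phi_lin : IntegrableOn (fun s => φ s * s) (Ioi 1) := by
  apply int_decay (D := C) (p := -N₀ + 2) (by linarith)
  · exact (((phi_contOn hderiv).mono (Ioi_subset_Ici le_rfl)).mul
      continuous_id.continuousOn).aestronglyMeasurable measurableSet_Ioi
  · intro s hs
    have hs1 : (1:ℝ) ≤ s := hs.le
    have hs0 : (0:ℝ) < s := by linarith
    rw [abs_mul, ← pow_mul_rpow hs1 (-N₀), ← mul_assoc, abs_of_pos hs0]
    calc |φ s| * s ≤ (C * s ^ (-N₀)) * s^2 := by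
          apply mul_le_mul (phi_bound hdecay s hs1) (by nlinarith) hs0.le
            ((abs_nonneg _).trans (phi_bound hdecay s hs1))
    _ = C * s ^ (-N₀) * s ^ 2 := by ring

include hderiv in
lemma eq_second : (∫ v : E3, ‖vhat v‖ ^ 2 * φ' (jap v))
    = (4*π) * ∫ s in Ioi (1:ℝ), φ' s * gW s := by
  have h1 : (fun v : E3 => ‖vhat v‖ ^ 2 * φ' (jap v))
      = fun v : E3 => (fun r : ℝ => r^2/(1+r^2) * φ' (Real.sqrt (1+r^2))) ‖v‖ := by
    funext v
    have hp : (0:ℝ) < 1 + ‖v‖^2 := by positivity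
    have hj : 0 < jap v := Real.sqrt_pos.2 hp
    have hj' : (0:ℝ) < Real.sqrt (1 + ‖v‖^2) := Real.sqrt_pos.2 hp
    simp only [vhat, jap, norm_smul, Real.norm_eq_abs]
    rw [abs_of_pos (inv_pos.2 hj'), mul_pow, inv_pow, Real.sq_sqrt hp.le]
    ring
  rw [h1, sph (fun r : ℝ => r^2/(1+r^2) * φ' (Real.sqrt (1+r^2)))]
  congr 1
  have h2 : ∫ r in Ioi (0:ℝ), r^2 * (r^2/(1+r^2) * φ' (Real.sqrt (1+r^2)))
      = ∫ r in Ioi (0:ℝ), r^2 * ((fun s : ℝ => (s^2-1)/s^2 * φ' s) (Real.sqrt (1+r^2))) := by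
    apply setIntegral_congr_fun measurableSet_Ioi
    intro r hr
    simp only
    rw [Real.sq_sqrt (by positivity : (0:ℝ) ≤ 1 + r^2)]
    ring_nf
  rw [h2, ← subst (fun s : ℝ => (s^2-1)/s^2 * φ' s)]
  apply setIntegral_congr_fun measurableSet_Ioi
  intro s hs
  have hs1 : (1:ℝ) < s := hs
  have hs0 : (0:ℝ) < s := by linarith
  set t := Real.sqrt (s^2-1) with htdef
  have ht2 : t^2 = s^2 - 1 := Real.sq_sqrt (by nlinarith)
  simp only [gW, ← htdef]
  rw [← ht2]
  field_simp

include hderiv in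
lemma eq_first : (∫ v : E3, (1 + (2 / 3) * ‖v‖ ^ 2) * (1 + ‖v‖ ^ 2) ^ (-(3 : ℝ) / 2) * φ (jap v))
    = (4*π/3) * ∫ s in Ioi (1:ℝ), φ s * gW' s := by
  have h1 : (fun v : E3 => (1 + (2 / 3) * ‖v‖ ^ 2) * (1 + ‖v‖ ^ 2) ^ (-(3 : ℝ) / 2) * φ (jap v))
      = fun v : E3 => (fun r : ℝ =>
        (1 + (2/3) * r^2) * (1 + r^2) ^ (-(3:ℝ)/2) * φ (Real.sqrt (1+r^2))) ‖v‖ := by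
    funext v; simp only [jap]
  rw [h1, sph (fun r : ℝ =>
    (1 + (2/3) * r^2) * (1 + r^2) ^ (-(3:ℝ)/2) * φ (Real.sqrt (1+r^2)))]
  have h2 : ∫ r in Ioi (0:ℝ), r^2 * ((1 + (2/3) * r^2) * (1 + r^2) ^ (-(3:ℝ)/2)
        * φ (Real.sqrt (1+r^2)))
      = ∫ r in Ioi (0:ℝ), r^2 * ((fun s : ℝ =>
        (1 + (2/3) * (s^2 - 1)) * (s^3)⁻¹ * φ s) (Real.sqrt (1+r^2))) := by
    apply setIntegral_congr_fun measurableSet_Ioi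
    intro r hr
    simp only
    rw [Real.sq_sqrt (by positivity : (0:ℝ) ≤ 1 + r^2),
      rpow_neg32 (by positivity : (0:ℝ) < 1 + r^2)]
    ring_nf
  rw [h2, ← subst (fun s : ℝ => (1 + (2/3) * (s^2 - 1)) * (s^3)⁻¹ * φ s)]
  have h3 : ∫ s in Ioi (1:ℝ), (s * Real.sqrt (s^2-1)) *
        ((fun s : ℝ => (1 + (2/3) * (s^2 - 1)) * (s^3)⁻¹ * φ s) s)
      = ∫ s in Ioi (1:ℝ), (1/3) * (φ s * gW' s) := by
    apply setIntegral_congr_fun measurableSet_Ioi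
    intro s hs
    have hs1 : (1:ℝ) < s := hs
    have hs0 : (0:ℝ) < s := by linarith
    set t := Real.sqrt (s^2-1) with htdef
    have ht2 : t^2 = s^2 - 1 := Real.sq_sqrt (by nlinarith)
    simp only [gW', ← htdef]
    have hs2 : s^2 = t^2 + 1 := by rw [ht2]; ring
    field_simp
    linear_combination (-(t * φ s)) * hs2
  rw [h3, integral_const_mul]
  ring

include hN₀ hcont hdecay in
lemma eq_kappa : (∫ u in (-1:ℝ)..1, u ^ 2 * kappaFn φ' u)
    = (4*π/3) * ∫ s in Ioi (1:ℝ), φ' s * gW s := by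
  rw [intervalIntegral.integral_of_le (by norm_num : (-1:ℝ) ≤ 1),
    MeasureTheory.integral_Ioc_eq_integral_Ioo]
  have h1 : ∀ u : ℝ, u ^ 2 * kappaFn φ' u
      = (2*π) * ((fun u : ℝ => u^2) u * ∫ s in Ioi (1 / Real.sqrt (1 - u^2)),
          (fun s : ℝ => φ' s * s ^ 2) s) := by
    intro u; simp only [kappaFn]; ring
  rw [show (∫ u in Ioo (-1:ℝ) 1, u ^ 2 * kappaFn φ' u)
      = ∫ u in Ioo (-1:ℝ) 1, (2*π) * ((fun u : ℝ => u^2) u * ∫ s in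
        Ioi (1 / Real.sqrt (1 - u^2)), (fun s : ℝ => φ' s * s ^ 2) s) from
    setIntegral_congr_fun measurableSet_Ioo (fun u _ => h1 u), integral_const_mul]
  rw [fubini_key (continuous_pow 2) (fun u hu => by
      rw [abs_of_nonneg (by positivity : (0:ℝ) ≤ u^2)]
      nlinarith [hu.1, hu.2]) (int_phi'_sq hN₀ hcont hdecay)]
  have h3 : ∫ s in Ioi (1:ℝ), (∫ u in Ioo (-(aFn s)) (aFn s), (fun u : ℝ => u^2) u)
        * ((fun s : ℝ => φ' s * s ^ 2) s)
      = ∫ s in Ioi (1:ℝ), (2/3) * (φ' s * gW s) := by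
    apply setIntegral_congr_fun measurableSet_Ioi
    intro s hs
    have hs1 : (1:ℝ) < s := hs
    have hs0 : (0:ℝ) < s := by linarith
    simp only
    rw [int_Ioo_sq (aFn_pos hs1)]
    simp only [aFn, gW]
    field_simp
  rw [h3, integral_const_mul]
  ring

include hN₀ hderiv hdecay in
lemma eq_q : (∫ u in (-1:ℝ)..1, qFn φ u)
    = -(8*π/3) * ∫ s in Ioi (1:ℝ), φ s * gW' s := by
  rw [intervalIntegral.integral_of_le (by norm_num : (-1:ℝ) ≤ 1),
    MeasureTheory.integral_Ioc_eq_integral_Ioo]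
  have h1 : ∀ u : ℝ, qFn φ u
      = (-(4*π)) * ((fun u : ℝ => 1 - u^2) u * ∫ s in Ioi (1 / Real.sqrt (1 - u^2)),
          (fun s : ℝ => φ s * s) s) := by
    intro u; simp only [qFn]; ring
  rw [show (∫ u in Ioo (-1:ℝ) 1, qFn φ u)
      = ∫ u in Ioo (-1:ℝ) 1, (-(4*π)) * ((fun u : ℝ => 1 - u^2) u * ∫ s in
        Ioi (1 / Real.sqrt (1 - u^2)), (fun s : ℝ => φ s * s) s) from
    setIntegral_congr_fun measurableSet_Ioo (fun u _ => h1 u), integral_const_mul]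
  rw [fubini_key (by continuity) (fun u hu => by
      rw [abs_of_nonneg (by nlinarith [hu.1, hu.2] : (0:ℝ) ≤ 1 - u^2)]
      nlinarith [sq_nonneg u]) (int_phi_lin hN₀ hderiv hdecay)]
  have h3 : ∫ s in Ioi (1:ℝ), (∫ u in Ioo (-(aFn s)) (aFn s), (fun u : ℝ => 1 - u^2) u)
        * ((fun s : ℝ => φ s * s) s)
      = ∫ s in Ioi (1:ℝ), (2/3) * (φ s * gW' s) := by
    apply setIntegral_congr_fun measurableSet_Ioi
    intro s hs
    have hs1 : (1:ℝ) < s := hs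
    have hs0 : (0:ℝ) < s := by linarith
    simp only
    rw [int_Ioo_one_sub_sq (aFn_pos hs1)]
    simp only [aFn, gW']
    set t := Real.sqrt (s^2-1) with htdef
    field_simp
  rw [h3, integral_const_mul]
  ring

end Main2

/-- four expressions for the constant `τ₀²`. -/
theorem stmt3
    (N₀ C : ℝ) (hN₀ : 5 < N₀)
    (φ φ' : ℝ → ℝ)
    (hpos : ∀ s : ℝ, 1 ≤ s → 0 ≤ φ s)
    (hderiv : ∀ s : ℝ, 1 ≤ s → HasDerivAt φ (φ' s) s)
    (hcont : ContinuousOn φ' (Set.Ici 1))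
    (hdecay : ∀ s : ℝ, 1 ≤ s → |φ s| + |φ' s| ≤ C * s ^ (-N₀)) :
    (∫ v : E3, (1 + (2 / 3) * ‖v‖ ^ 2) * (1 + ‖v‖ ^ 2) ^ (-(3 : ℝ) / 2) * φ (jap v))
        = -(1 / 3) * ∫ v : E3, ‖vhat v‖ ^ 2 * φ' (jap v) ∧
    (-(1 / 3) * ∫ v : E3, ‖vhat v‖ ^ 2 * φ' (jap v))
        = -∫ u in (-1 : ℝ)..1, u ^ 2 * kappaFn φ' u ∧
    (-∫ u in (-1 : ℝ)..1, u ^ 2 * kappaFn φ' u)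
        = -(1 / 2) * ∫ u in (-1 : ℝ)..1, qFn φ u := by
  have hibp := ibp hN₀ hderiv hcont hdecay
  refine ⟨?_, ?_, ?_⟩
  · rw [eq_first hderiv, eq_second hderiv, hibp]
    ring
  · rw [eq_second hderiv, eq_kappa hN₀ hcont hdecay, hibp]
    ring
  · rw [eq_kappa hN₀ hcont hdecay, eq_q hN₀ hderiv hdecay, hibp]
    ring
end
end

section
/- Let κ : [-1,1] → ℝ be integrable with κ(u) ≤ 0 for almost every u. Then for every r > 0 and every λ = γ + iτ ∈ ℂ with γ ≠ 0, one has 1 - (1/r²) ∫_{-1}^{1} u κ(u)/(-iλ/r + u) du ≠ 0. In other words, the reduced electric dispersion function D(λ,k) = 1 - |k|^{-2} ∫_{-1}^{1} u κ(u)/(-iλ/|k| + u) du has no zeros λ with nonzero real part. -/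
open MeasureTheory Real Complex

noncomputable section

/-- the reduced electric dispersion function has no zeros off the
imaginary axis. -/
theorem stmt4
    (κ : ℝ → ℝ)
    (hint : IntegrableOn κ (Set.Icc (-1 : ℝ) 1))
    (hneg : ∀ᵐ u ∂(volume.restrict (Set.Icc (-1 : ℝ) 1)), κ u ≤ 0)
    (r : ℝ) (hr : 0 < r)
    (l : ℂ) (hl : l.re ≠ 0) :
    (1 : ℂ) - (1 / (r : ℂ) ^ 2) *
        ∫ u in (-1 : ℝ)..1, ((u * κ u : ℝ) : ℂ) / (-Complex.I * l / (r : ℂ) + (u : ℂ))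
      ≠ 0 := by
  set b := l.im / r with hb
  set c := l.re / r with hc0
  have hc : c ≠ 0 := div_ne_zero hl hr.ne'
  set N : ℝ → ℝ := fun u => (u + b) ^ 2 + c ^ 2 with hN
  have hNpos : ∀ u, 0 < N u := fun u => by
    have h1 : c ^ 2 > 0 := pow_pos (abs_pos.mpr hc) 2 |>.trans_eq (sq_abs c)
    simp only [hN]
    nlinarith [sq_nonneg (u + b)]
  set den : ℝ → ℂ := fun u => -Complex.I * l / (r : ℂ) + (u : ℂ) with hden
  have hden_re : ∀ u, (den u).re = u + b := by
    intro u
    simp [hden, hb, Complex.div_re, Complex.normSq_ofReal]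
    field_simp
    ring
  have hden_im : ∀ u, (den u).im = -c := by
    intro u
    simp [hden, hc0, Complex.div_im, Complex.normSq_ofReal]
    field_simp
  have hden_ne : ∀ u, den u ≠ 0 := by
    intro u h
    have := hden_im u
    rw [h] at this
    simp at this
    exact hc this
  have hnormSq : ∀ u, Complex.normSq (den u) = N u := by
    intro u
    rw [Complex.normSq_apply, hden_re, hden_im, hN]
    ring
  set f : ℝ → ℂ := fun u => ((u * κ u : ℝ) : ℂ) / den u with hf
  have hre : ∀ u, (f u).re = u * κ u * (u + b) / N u := by
    intro u
    rw [hf]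
    simp only [Complex.div_re, Complex.ofReal_re, Complex.ofReal_im, hnormSq, hden_re]
    ring
  have him : ∀ u, (f u).im = u * κ u * c / N u := by
    intro u
    rw [hf]
    simp only [Complex.div_im, Complex.ofReal_re, Complex.ofReal_im, hnormSq, hden_im]
    ring
  -- integrability
  have hK : IsCompact (Set.Icc (-1 : ℝ) 1) := isCompact_Icc
  have hfint : IntegrableOn f (Set.Icc (-1 : ℝ) 1) := by
    have hg : ContinuousOn (fun u : ℝ => (u : ℂ) / den u) (Set.Icc (-1 : ℝ) 1) := by
      apply ContinuousOn.div
      · exact Complex.continuous_ofReal.continuousOn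
      · exact (Continuous.add (by continuity) Complex.continuous_ofReal).continuousOn
      · intro u _; exact hden_ne u
    have := hint.smul_continuousOn hg hK
    refine this.congr_fun (fun u _ => ?_) measurableSet_Icc
    simp [hf, Complex.ofReal_mul, smul_eq_mul]
    ring
  have hNc : Continuous N := by
    simp only [hN]; fun_prop
  have hint1 : IntegrableOn (fun u => u * κ u / N u) (Set.Icc (-1 : ℝ) 1) := by
    have hg : ContinuousOn (fun u : ℝ => u / N u) (Set.Icc (-1 : ℝ) 1) := by
      apply ContinuousOn.div continuousOn_id hNc.continuousOn
      intro u _; exact (hNpos u).ne'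
    have := hint.mul_continuousOn hg hK
    refine this.congr_fun (fun u _ => ?_) measurableSet_Icc
    ring
  have hint2 : IntegrableOn (fun u => u ^ 2 * κ u / N u) (Set.Icc (-1 : ℝ) 1) := by
    have hg : ContinuousOn (fun u : ℝ => u ^ 2 / N u) (Set.Icc (-1 : ℝ) 1) := by
      apply ContinuousOn.div (continuous_pow 2).continuousOn hNc.continuousOn
      intro u _; exact (hNpos u).ne'
    have := hint.mul_continuousOn hg hK
    refine this.congr_fun (fun u _ => ?_) measurableSet_Icc
    ring
  -- main argument
  intro heq
  have hr2 : ((r : ℂ) ^ 2) ≠ 0 := by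
    simp [pow_eq_zero_iff]
    exact_mod_cast hr.ne'
  have hI : (∫ u in (-1 : ℝ)..1, f u) = (r : ℂ) ^ 2 := by
    have := sub_eq_zero.mp heq
    field_simp at this
    rw [eq_div_iff hr2] at this
    linear_combination -this
  rw [intervalIntegral.integral_of_le (by norm_num : (-1 : ℝ) ≤ 1),
    ← MeasureTheory.integral_Icc_eq_integral_Ioc] at hI
  have hIm : (∫ u in Set.Icc (-1 : ℝ) 1, (f u).im) = 0 := by
    rw [show (fun u => (f u).im) = fun u => RCLike.im (f u) from rfl]
    rw [integral_im hfint, hI]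
    simp [← Complex.ofReal_pow]
  have hRe : (∫ u in Set.Icc (-1 : ℝ) 1, (f u).re) = r ^ 2 := by
    rw [show (fun u => (f u).re) = fun u => RCLike.re (f u) from rfl]
    rw [integral_re hfint, hI]
    simp [← Complex.ofReal_pow]
  -- from imaginary part: ∫ uκ/N = 0
  have hIm' : (∫ u in Set.Icc (-1 : ℝ) 1, u * κ u / N u) = 0 := by
    have : (∫ u in Set.Icc (-1 : ℝ) 1, (f u).im)
        = c * ∫ u in Set.Icc (-1 : ℝ) 1, u * κ u / N u := by
      rw [← integral_const_mul]
      congr 1; ext u; rw [him]; ring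
    rw [this] at hIm
    exact (mul_eq_zero.mp hIm).resolve_left hc
  -- real part
  have hRe' : (∫ u in Set.Icc (-1 : ℝ) 1, u ^ 2 * κ u / N u) = r ^ 2 := by
    have hsplit : (∫ u in Set.Icc (-1 : ℝ) 1, (f u).re)
        = (∫ u in Set.Icc (-1 : ℝ) 1, u ^ 2 * κ u / N u)
          + b * ∫ u in Set.Icc (-1 : ℝ) 1, u * κ u / N u := by
      rw [← integral_const_mul, ← integral_add hint2 (hint1.const_mul b)]
      congr 1; ext u; rw [hre]; field_simp
    rw [hsplit, hIm', mul_zero, add_zero] at hRe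
    exact hRe
  have hnonpos : (∫ u in Set.Icc (-1 : ℝ) 1, u ^ 2 * κ u / N u) ≤ 0 := by
    apply integral_nonpos_of_ae
    filter_upwards [hneg] with u hu
    have := hNpos u
    have h1 : u ^ 2 * κ u ≤ 0 := mul_nonpos_of_nonneg_of_nonpos (sq_nonneg u) hu
    exact div_nonpos_of_nonpos_of_nonneg h1 this.le
  rw [hRe'] at hnonpos
  nlinarith
end
end

section
/- Let q : [-1,1] → ℝ be integrable with q(u) ≤ 0 for almost every u. Then for every r > 0 and every λ ∈ ℂ with Re λ ≠ 0, one has λ² + r² + (iλ/(2r)) ∫_{-1}^{1} q(u)/(-iλ/r + u) du ≠ 0. In other words, the reduced magnetic dispersion function M(λ,k) = λ² + |k|² + (iλ/(2|k|)) ∫_{-1}^{1} q(u)/(-iλ/|k| + u) du has no zeros λ with nonzero real part. -/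
open MeasureTheory Real Complex

noncomputable section

lemma aux_div (a p s : ℝ) (h : p^2+s^2 ≠ 0) :
    (a:ℂ)/((p:ℂ)+(s:ℂ)*Complex.I)
      = ((a*(p/(p^2+s^2)):ℝ):ℂ) - ((a*(s/(p^2+s^2)):ℝ):ℂ)*Complex.I := by
  have hC : ((p:ℂ)^2+(s:ℂ)^2) ≠ 0 := by exact_mod_cast (Complex.ofReal_ne_zero.2 h)
  have hc : ((p:ℂ)+(s:ℂ)*Complex.I) ≠ 0 := by
    intro h0
    apply h
    have h1 := congrArg Complex.re h0
    have h2 := congrArg Complex.im h0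
    simp at h1 h2
    simp [h1, h2]
  rw [div_eq_iff hc]
  push_cast
  field_simp
  ring_nf
  simp [Complex.I_sq]

/-- the reduced magnetic dispersion function has no zeros off the
imaginary axis. -/
theorem stmt5
    (q : ℝ → ℝ)
    (hint : IntegrableOn q (Set.Icc (-1 : ℝ) 1))
    (hneg : ∀ᵐ u ∂(volume.restrict (Set.Icc (-1 : ℝ) 1)), q u ≤ 0)
    (r : ℝ) (hr : 0 < r)
    (l : ℂ) (hl : l.re ≠ 0) :
    l ^ 2 + (r : ℂ) ^ 2 + (Complex.I * l / (2 * (r : ℂ))) *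
        ∫ u in (-1 : ℝ)..1, ((q u : ℝ) : ℂ) / (-Complex.I * l / (r : ℂ) + (u : ℂ))
      ≠ 0 := by
  intro H
  have hr0 : (r:ℂ) ≠ 0 := Complex.ofReal_ne_zero.2 hr.ne'
  set z : ℂ := -Complex.I * l / (r : ℂ) with hz
  set x := z.re with hx
  set y := z.im with hyd
  have hzxy : z = (x:ℂ) + (y:ℂ)*Complex.I := (Complex.re_add_im z).symm
  have hlz : l = (r:ℂ) * Complex.I * z := by
    rw [hz]; field_simp; ring_nf; simp [Complex.I_sq]
  have hlre : l.re = -(r * y) := by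
    rw [hlz]; simp [Complex.mul_re, Complex.mul_im]
    exact Or.inl rfl
  have hy : y ≠ 0 := by
    intro h0; apply hl; rw [hlre, h0]; ring
  have hD : ∀ u : ℝ, (u+x)^2 + y^2 ≠ 0 := fun u => by positivity
  -- pointwise rewrite of the integrand
  have key : ∀ u : ℝ, ((q u : ℝ) : ℂ) / (-Complex.I * l / (r : ℂ) + (u : ℂ))
      = (((q u * ((u+x)/((u+x)^2+y^2))) : ℝ):ℂ)
        - (((q u * (y/((u+x)^2+y^2))) : ℝ):ℂ) * Complex.I := by
    intro u
    have : -Complex.I * l / (r : ℂ) + (u : ℂ) = ((u+x:ℝ):ℂ) + ((y:ℝ):ℂ)*Complex.I := by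
      rw [← hz, hzxy]; push_cast; ring
    rw [this, aux_div (q u) (u+x) y (hD u)]
  simp only [hz, key] at H
  -- integrability
  have hqI : IntervalIntegrable q volume (-1:ℝ) 1 := by
    rw [intervalIntegrable_iff_integrableOn_Icc_of_le (by norm_num)]
    exact hint
  have hden : Continuous fun u : ℝ => (u+x)^2+y^2 := by fun_prop
  have hcont1 : ContinuousOn (fun u : ℝ => (u+x)/((u+x)^2+y^2)) (Set.uIcc (-1:ℝ) 1) :=
    (((continuous_id.add continuous_const).div hden hD)).continuousOn
  have hcont2 : ContinuousOn (fun u : ℝ => y/((u+x)^2+y^2)) (Set.uIcc (-1:ℝ) 1) :=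
    ((continuous_const.div hden hD)).continuousOn
  have hcont3 : ContinuousOn (fun u : ℝ => u/((u+x)^2+y^2)) (Set.uIcc (-1:ℝ) 1) :=
    ((continuous_id.div hden hD)).continuousOn
  have hcont4 : ContinuousOn (fun u : ℝ => (1:ℝ)/((u+x)^2+y^2)) (Set.uIcc (-1:ℝ) 1) :=
    ((continuous_const.div hden hD)).continuousOn
  have hint1 : IntervalIntegrable (fun u => q u * ((u+x)/((u+x)^2+y^2))) volume (-1:ℝ) 1 :=
    hqI.mul_continuousOn hcont1
  have hint2 : IntervalIntegrable (fun u => q u * (y/((u+x)^2+y^2))) volume (-1:ℝ) 1 :=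
    hqI.mul_continuousOn hcont2
  have hint3 : IntervalIntegrable (fun u => q u * (u/((u+x)^2+y^2))) volume (-1:ℝ) 1 :=
    hqI.mul_continuousOn hcont3
  have hint4 : IntervalIntegrable (fun u => q u * ((1:ℝ)/((u+x)^2+y^2))) volume (-1:ℝ) 1 :=
    hqI.mul_continuousOn hcont4
  -- split the complex integral
  have hsplit : (∫ u in (-1:ℝ)..1,
        ((((q u * ((u+x)/((u+x)^2+y^2))) : ℝ):ℂ)
        - (((q u * (y/((u+x)^2+y^2))) : ℝ):ℂ) * Complex.I))
      = ((∫ u in (-1:ℝ)..1, q u * ((u+x)/((u+x)^2+y^2)) : ℝ):ℂ)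
        - ((∫ u in (-1:ℝ)..1, q u * (y/((u+x)^2+y^2)) : ℝ):ℂ) * Complex.I := by
    have ofRealII : ∀ {f : ℝ → ℝ}, IntervalIntegrable f volume (-1:ℝ) 1 →
        IntervalIntegrable (fun u => ((f u : ℝ):ℂ)) volume (-1:ℝ) 1 := fun h =>
      ⟨Complex.ofRealCLM.integrable_comp h.1, Complex.ofRealCLM.integrable_comp h.2⟩
    rw [intervalIntegral.integral_sub (ofRealII hint1)
      ((ofRealII hint2).mul_const Complex.I),
      intervalIntegral.integral_mul_const, intervalIntegral.integral_ofReal,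
      intervalIntegral.integral_ofReal]
  rw [hsplit] at H
  set K1 : ℝ := ∫ u in (-1:ℝ)..1, q u * (u/((u+x)^2+y^2)) with hK1
  set K2 : ℝ := ∫ u in (-1:ℝ)..1, q u * ((1:ℝ)/((u+x)^2+y^2)) with hK2
  have hA : (∫ u in (-1:ℝ)..1, q u * ((u+x)/((u+x)^2+y^2))) = K1 + x * K2 := by
    rw [hK1, hK2, ← intervalIntegral.integral_const_mul,
        ← intervalIntegral.integral_add hint3 (hint4.const_mul x)]
    apply intervalIntegral.integral_congr
    intro u _
    field_simp
  have hB : (∫ u in (-1:ℝ)..1, q u * (y/((u+x)^2+y^2))) = y * K2 := by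
    rw [hK2, ← intervalIntegral.integral_const_mul]
    apply intervalIntegral.integral_congr
    intro u _
    field_simp
  rw [hA, hB, hlz, hzxy] at H
  -- K2 ≤ 0
  have hK2neg : K2 ≤ 0 := by
    rw [hK2, intervalIntegral.integral_of_le (by norm_num : (-1:ℝ) ≤ 1)]
    apply integral_nonpos_of_ae
    have hsub : volume.restrict (Set.Ioc (-1:ℝ) 1) ≤ volume.restrict (Set.Icc (-1:ℝ) 1) :=
      Measure.restrict_mono Set.Ioc_subset_Icc_self le_rfl
    filter_upwards [ae_mono hsub hneg] with u hu
    have h1 : (0:ℝ) < (u+x)^2+y^2 := by positivity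
    have : 0 ≤ (1:ℝ)/((u+x)^2+y^2) := by positivity
    exact mul_nonpos_of_nonpos_of_nonneg hu this
  -- extract real equations
  have H2 : ((r:ℂ) * Complex.I * ((x:ℂ) + (y:ℂ)*Complex.I)) ^ 2 * (2*(r:ℂ)) + (r:ℂ)^2 * (2*(r:ℂ))
      + Complex.I * ((r:ℂ) * Complex.I * ((x:ℂ) + (y:ℂ)*Complex.I)) *
        (((K1 + x*K2 : ℝ):ℂ) - ((y*K2:ℝ):ℂ) * Complex.I) = 0 := by
    have h2r : (2*(r:ℂ)) ≠ 0 := by simpa using hr0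
    field_simp at H
    push_cast at H ⊢
    linear_combination (r:ℂ) * H
  rw [Complex.ext_iff] at H2
  obtain ⟨e1, e2⟩ := H2
  simp [pow_two, Complex.mul_re, Complex.mul_im, Complex.add_re, Complex.add_im] at e1 e2
  ring_nf at e1 e2
  -- derive contradiction
  have hxy : 0 < x^2 + y^2 := by positivity
  have hry : r*y ≠ 0 := mul_ne_zero hr.ne' hy
  have h0 : (r*y) * (K1 + 4*r^2*x) = 0 := by nlinarith [e2]
  have hK1v : K1 = -(4*r^2*x) := by
    have := (mul_eq_zero.1 h0).resolve_left hry
    linarith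
  rw [hK1v] at e1
  nlinarith [mul_nonpos_of_nonneg_of_nonpos (mul_nonneg hr.le hxy.le) hK2neg,
    mul_pos hr (mul_pos hr hr), mul_pos (mul_pos (mul_pos hr hr) hr) hxy]
end
end

section
/- Let κ : (-1,1) → ℝ be continuous, with κ(u) ≤ 0 for all u, κ(u₀) < 0 for some u₀ ∈ (-1,1), κ even, and |κ(u)| ≤ C(1-u²)^{α} for some α > 1. Define Ω(y) := -∫_{-1}^{1} y u² κ(u)/(1 - y u²) du for y ∈ [0,1], τ₀² := -∫_{-1}^{1} u² κ(u) du, and κ₀ := √(Ω(1)). Then: (i) Ω is continuous and strictly increasing on [0,1] with Ω(0) = 0; (ii) for every r with 0 < r ≤ κ₀ there is a unique τ ≥ r satisfying Ω(r²/τ²) = r², and this τ equals τ*(r) := (r²/Ω^{-1}(r²))^{1/2}; (iii) for every r > κ₀ there is no τ ≥ r with Ω(r²/τ²) = r²; (iv) τ*(κ₀) = κ₀, and for 0 < r < κ₀ one has τ₀ < τ*(r) < κ₀ and r < τ*(r) < √(τ₀² + r²). -/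
open MeasureTheory Real

noncomputable section

/-- `Ω(y) = -∫_{-1}^{1} y u² κ(u)/(1 - y u²) du`. -/
def OmegaFn (κ : ℝ → ℝ) (y : ℝ) : ℝ :=
  -∫ u in (-1 : ℝ)..1, y * u ^ 2 * κ u / (1 - y * u ^ 2)

/-- `τ₀² = -∫_{-1}^{1} u² κ(u) du`. -/
def tau0Sq (κ : ℝ → ℝ) : ℝ := -∫ u in (-1 : ℝ)..1, u ^ 2 * κ u

/-- `κ₀ = √(Ω(1))`. -/
def kappa0 (κ : ℝ → ℝ) : ℝ := Real.sqrt (OmegaFn κ 1)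

/-- `τ*(r) = (r²/Ω⁻¹(r²))^{1/2}`, where `Ω⁻¹` is the inverse of `Ω` on `[0,1]`. -/
def tauStar (κ : ℝ → ℝ) (r : ℝ) : ℝ :=
  Real.sqrt (r ^ 2 / Function.invFunOn (OmegaFn κ) (Set.Icc 0 1) (r ^ 2))

namespace Stmt12Aux

open Set

/-- The integrand of `Ω`. -/
def gg (κ : ℝ → ℝ) (y u : ℝ) : ℝ := y * u ^ 2 * κ u / (1 - y * u ^ 2)

lemma omega_eq (κ : ℝ → ℝ) (y : ℝ) :
    OmegaFn κ y = -∫ u in Ioo (-1 : ℝ) 1, gg κ y u := by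
  rw [OmegaFn, intervalIntegral.integral_of_le (by norm_num), integral_Ioc_eq_integral_Ioo]
  rfl

lemma tau0_eqIoo (κ : ℝ → ℝ) :
    tau0Sq κ = -∫ u in Ioo (-1 : ℝ) 1, u ^ 2 * κ u := by
  rw [tau0Sq, intervalIntegral.integral_of_le (by norm_num), integral_Ioc_eq_integral_Ioo]

lemma omega_zero (κ : ℝ → ℝ) : OmegaFn κ 0 = 0 := by
  simp [OmegaFn]

lemma le_div_of {D c N : ℝ} (hD : 0 < D) (hD1 : D ≤ 1) (hc : 0 ≤ c) (hN : c ≤ N) :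
    c ≤ N / D := by
  rw [le_div_iff₀ hD]; nlinarith

variable {κ : ℝ → ℝ} {C α : ℝ}

lemma denoms {y u : ℝ} (hy0 : 0 ≤ y) (hy1 : y ≤ 1) (hu : u ∈ Ioo (-1 : ℝ) 1) :
    0 < 1 - u ^ 2 ∧ 1 - u ^ 2 ≤ 1 - y * u ^ 2 ∧ 1 - y * u ^ 2 ≤ 1 := by
  obtain ⟨h1, h2⟩ := hu
  refine ⟨by nlinarith, by nlinarith [sq_nonneg u], by nlinarith [sq_nonneg u]⟩

lemma rpow_split {u : ℝ} (h : 0 < 1 - u ^ 2) (α : ℝ) :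
    (1 - u ^ 2) ^ α = (1 - u ^ 2) ^ (α - 1) * (1 - u ^ 2) := by
  rw [show α = (α - 1) + 1 by ring, Real.rpow_add_one h.ne']
  ring_nf

lemma bound_ptwise (hC : 0 ≤ C)
    (hbound : ∀ u ∈ Set.Ioo (-1 : ℝ) 1, |κ u| ≤ C * (1 - u ^ 2) ^ α)
    {y : ℝ} (hy : y ∈ Icc (0:ℝ) 1) {u : ℝ} (hu : u ∈ Ioo (-1 : ℝ) 1) :
    |gg κ y u| ≤ C * (1 - u ^ 2) ^ (α - 1) := by
  obtain ⟨h1, h2, h3⟩ := denoms hy.1 hy.2 hu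
  have hD : 0 < 1 - y * u ^ 2 := lt_of_lt_of_le h1 h2
  have hyu : y * u ^ 2 ≤ 1 := by nlinarith [sq_nonneg u, hy.1, hy.2]
  have hyu0 : 0 ≤ y * u ^ 2 := mul_nonneg hy.1 (sq_nonneg u)
  have hk := hbound u hu
  have hp : (0:ℝ) ≤ (1 - u ^ 2) ^ (α - 1) := Real.rpow_nonneg (by linarith) _
  have heq := rpow_split h1 α
  rw [gg, abs_div, abs_of_pos hD, abs_mul, abs_mul, abs_of_nonneg hy.1,
    abs_of_nonneg (sq_nonneg u), div_le_iff₀ hD]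
  have hCp : 0 ≤ C * (1 - u ^ 2) ^ (α - 1) := by positivity
  nlinarith [abs_nonneg (κ u), mul_le_mul_of_nonneg_left h2 hCp]

lemma meas_g (hcont : ContinuousOn κ (Set.Ioo (-1 : ℝ) 1)) {y : ℝ} (hy : y ∈ Icc (0:ℝ) 1) :
    ContinuousOn (gg κ y) (Ioo (-1 : ℝ) 1) := by
  apply ContinuousOn.div
  · exact (continuousOn_const.mul (continuousOn_pow 2)).mul hcont
  · fun_prop
  · intro u hu
    obtain ⟨h1, h2, _⟩ := denoms hy.1 hy.2 hu
    exact (lt_of_lt_of_le h1 h2).ne'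

lemma intB (hα : 1 < α) :
    IntegrableOn (fun u : ℝ => C * (1 - u ^ 2) ^ (α - 1)) (Ioo (-1 : ℝ) 1) := by
  have : Continuous (fun u : ℝ => C * (1 - u ^ 2) ^ (α - 1)) := by
    refine continuous_const.mul (continuous_iff_continuousAt.2 fun x => ?_)
    exact (Real.continuousAt_rpow_const _ _ (Or.inr (by linarith))).comp
      (by fun_prop : ContinuousAt (fun u : ℝ => 1 - u ^ 2) x)
  exact (this.continuousOn.integrableOn_Icc (a := -1) (b := 1)).mono_set Ioo_subset_Icc_self

lemma int_g (hα : 1 < α) (hC : 0 ≤ C) (hcont : ContinuousOn κ (Set.Ioo (-1 : ℝ) 1))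
    (hbound : ∀ u ∈ Set.Ioo (-1 : ℝ) 1, |κ u| ≤ C * (1 - u ^ 2) ^ α)
    {y : ℝ} (hy : y ∈ Icc (0:ℝ) 1) :
    IntegrableOn (gg κ y) (Ioo (-1 : ℝ) 1) := by
  refine (intB hα (C := C)).integrable.mono'
    ((meas_g hcont hy).aestronglyMeasurable measurableSet_Ioo) ?_
  refine (ae_restrict_iff' measurableSet_Ioo).2 (ae_of_all _ fun u hu => ?_)
  simpa [Real.norm_eq_abs] using bound_ptwise hC hbound hy hu

lemma int_u2k (hα : 1 < α) (hC : 0 ≤ C) (hcont : ContinuousOn κ (Set.Ioo (-1 : ℝ) 1))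
    (hbound : ∀ u ∈ Set.Ioo (-1 : ℝ) 1, |κ u| ≤ C * (1 - u ^ 2) ^ α) :
    IntegrableOn (fun u => u ^ 2 * κ u) (Ioo (-1 : ℝ) 1) := by
  refine (intB hα (C := C)).integrable.mono' (((continuousOn_pow 2).mul hcont).aestronglyMeasurable
    measurableSet_Ioo) ?_
  refine (ae_restrict_iff' measurableSet_Ioo).2 (ae_of_all _ fun u hu => ?_)
  obtain ⟨h1, -, -⟩ := denoms le_rfl zero_le_one hu
  have hrp : (1 - u ^ 2) ^ α ≤ (1 - u ^ 2) ^ (α - 1) :=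
    Real.rpow_le_rpow_of_exponent_ge h1 (by nlinarith [sq_nonneg u]) (by linarith)
  have hu2 : u ^ 2 ≤ 1 := by nlinarith [hu.1, hu.2]
  have hk := hbound u hu
  rw [Real.norm_eq_abs, abs_mul, abs_of_nonneg (sq_nonneg u)]
  nlinarith [abs_nonneg (κ u), sq_nonneg u, mul_le_mul_of_nonneg_left hrp hC]

lemma tau0_nonneg (hneg : ∀ u ∈ Set.Ioo (-1 : ℝ) 1, κ u ≤ 0) : 0 ≤ tau0Sq κ := by
  rw [tau0_eqIoo, neg_nonneg]
  refine setIntegral_nonpos measurableSet_Ioo fun u hu => ?_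
  exact mul_nonpos_iff.2 (Or.inl ⟨sq_nonneg u, hneg u hu⟩)

lemma C_pos (hne : ∃ u₀ ∈ Set.Ioo (-1 : ℝ) 1, κ u₀ < 0)
    (hbound : ∀ u ∈ Set.Ioo (-1 : ℝ) 1, |κ u| ≤ C * (1 - u ^ 2) ^ α) : 0 < C := by
  obtain ⟨u₀, hu₀, hneg⟩ := hne
  have h := hbound u₀ hu₀
  have h1 : 0 < 1 - u₀ ^ 2 := by nlinarith [hu₀.1, hu₀.2]
  have hp : (0:ℝ) < (1 - u₀ ^ 2) ^ α := Real.rpow_pos_of_pos h1 _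
  have : 0 < |κ u₀| := abs_pos.2 hneg.ne
  nlinarith

lemma exists_neg_interval (hcont : ContinuousOn κ (Set.Ioo (-1 : ℝ) 1))
    (hne : ∃ u₀ ∈ Set.Ioo (-1 : ℝ) 1, κ u₀ < 0)
    (heven : ∀ u ∈ Set.Ioo (-1 : ℝ) 1, κ (-u) = κ u) :
    ∃ a b δ : ℝ, 0 < a ∧ a < b ∧ Icc a b ⊆ Ioo (-1 : ℝ) 1 ∧ 0 < δ ∧
      ∀ u ∈ Icc a b, κ u ≤ -δ := by
  obtain ⟨u₀, hu₀, hk₀⟩ := hne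
  have hpos : ∃ u₁ ∈ Ioo (-1:ℝ) 1, 0 < u₁ ∧ κ u₁ < 0 := by
    rcases lt_trichotomy u₀ 0 with h | h | h
    · refine ⟨-u₀, ⟨by linarith [hu₀.2], by linarith [hu₀.1]⟩, by linarith, ?_⟩
      rw [heven u₀ hu₀]; exact hk₀
    · have h0I : (0:ℝ) ∈ Ioo (-1:ℝ) 1 := by constructor <;> norm_num
      have hk0 : κ 0 < 0 := h ▸ hk₀
      have hca : ContinuousAt κ 0 := hcont.continuousAt (Ioo_mem_nhds h0I.1 h0I.2)
      have hS : {u : ℝ | κ u < 0} ∈ nhds (0:ℝ) := hca.preimage_mem_nhds (Iio_mem_nhds hk0)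
      obtain ⟨ε, hε, hball⟩ := Metric.mem_nhds_iff.1 (Filter.inter_mem hS
        (Ioo_mem_nhds h0I.1 h0I.2))
      have hvε : min ε 1 / 2 ≤ ε / 2 := by gcongr; exact min_le_left _ _
      have hv0 : 0 < min ε 1 / 2 := by positivity
      have hvb : min ε 1 / 2 ∈ Metric.ball (0:ℝ) ε := by
        simp only [Metric.mem_ball, Real.dist_eq, sub_zero]
        rw [abs_of_pos hv0]
        linarith
      obtain ⟨hκv, hvI⟩ := hball hvb
      exact ⟨_, hvI, hv0, hκv⟩
    · exact ⟨u₀, hu₀, h, hk₀⟩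
  obtain ⟨u₁, hu₁, hu₁0, hk₁⟩ := hpos
  have hca : ContinuousAt κ u₁ := hcont.continuousAt (Ioo_mem_nhds hu₁.1 hu₁.2)
  have hS : {u : ℝ | κ u < κ u₁ / 2} ∈ nhds u₁ :=
    hca.preimage_mem_nhds (Iio_mem_nhds (by linarith))
  have hT : ({u : ℝ | κ u < κ u₁ / 2} ∩ Ioo (-1:ℝ) 1) ∩ Ioi 0 ∈ nhds u₁ :=
    Filter.inter_mem (Filter.inter_mem hS (Ioo_mem_nhds hu₁.1 hu₁.2)) (Ioi_mem_nhds hu₁0)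
  obtain ⟨ε, hε, hball⟩ := Metric.mem_nhds_iff.1 hT
  refine ⟨u₁ - ε / 2, u₁ + ε / 2, -(κ u₁ / 2), ?_, by linarith, ?_, by linarith, ?_⟩
  · have : u₁ - ε / 2 ∈ Metric.ball u₁ ε := by
      rw [Metric.mem_ball, Real.dist_eq, show u₁ - ε / 2 - u₁ = -(ε / 2) by ring, abs_neg,
        abs_of_pos (by linarith)]
      linarith
    exact (hball this).2
  · intro u hu
    have : u ∈ Metric.ball u₁ ε := by
      simp only [Metric.mem_ball, Real.dist_eq, abs_lt]
      constructor <;> [linarith [hu.1]; linarith [hu.2]]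
    exact ((hball this).1).2
  · intro u hu
    have : u ∈ Metric.ball u₁ ε := by
      simp only [Metric.mem_ball, Real.dist_eq, abs_lt]
      constructor <;> [linarith [hu.1]; linarith [hu.2]]
    have := ((hball this).1).1
    simp only [mem_setOf_eq] at this
    linarith

lemma integral_pos_of {a b c : ℝ} (hab : a < b) (hsub : Icc a b ⊆ Ioo (-1 : ℝ) 1)
    {h : ℝ → ℝ} (hint : IntegrableOn h (Ioo (-1 : ℝ) 1))
    (h0 : ∀ u ∈ Ioo (-1 : ℝ) 1, 0 ≤ h u) (hc : 0 < c)
    (hlb : ∀ u ∈ Icc a b, c ≤ h u) :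
    0 < ∫ u in Ioo (-1 : ℝ) 1, h u := by
  have h1 : ∫ u in Icc a b, h u ≤ ∫ u in Ioo (-1:ℝ) 1, h u := by
    refine setIntegral_mono_set hint ?_ (HasSubset.Subset.eventuallyLE hsub)
    exact (ae_restrict_iff' measurableSet_Ioo).2 (ae_of_all _ h0)
  have h2 : c * (b - a) ≤ ∫ u in Icc a b, h u := by
    have hconst : ∫ _u in Icc a b, c = c * (b - a) := by
      rw [setIntegral_const, Real.volume_real_Icc_of_le hab.le, smul_eq_mul]
      ring
    rw [← hconst]
    exact setIntegral_mono_on (integrableOn_const (by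
      rw [Real.volume_Icc]; exact ENNReal.ofReal_ne_top))
      (hint.mono_set hsub) measurableSet_Icc hlb
  nlinarith

lemma omega_cont (hα : 1 < α)
    (meas_g' : ∀ y ∈ Icc (0:ℝ) 1, ContinuousOn (gg κ y) (Ioo (-1 : ℝ) 1))
    (bound_ptwise' : ∀ y ∈ Icc (0:ℝ) 1, ∀ u ∈ Ioo (-1 : ℝ) 1,
      |gg κ y u| ≤ C * (1 - u ^ 2) ^ (α - 1)) :
    ContinuousOn (OmegaFn κ) (Icc (0:ℝ) 1) := by
  have key : ContinuousOn (fun y => ∫ u in Ioo (-1:ℝ) 1, gg κ y u) (Icc (0:ℝ) 1) := by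
    apply MeasureTheory.continuousOn_of_dominated
      (bound := fun u => C * (1 - u ^ 2) ^ (α - 1))
    · exact fun y hy => ((meas_g' y hy).aestronglyMeasurable measurableSet_Ioo)
    · intro y hy
      refine (ae_restrict_iff' measurableSet_Ioo).2 (ae_of_all _ fun u hu => ?_)
      simpa [Real.norm_eq_abs] using bound_ptwise' y hy u hu
    · exact intB hα (C := C)
    · refine (ae_restrict_iff' measurableSet_Ioo).2 (ae_of_all _ fun u hu => ?_)
      apply ContinuousOn.div
      · fun_prop
      · fun_prop
      · intro y hy
        obtain ⟨h1, h2, _⟩ := denoms hy.1 hy.2 hu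
        exact (lt_of_lt_of_le h1 h2).ne'
  exact key.neg.congr fun y _ => omega_eq κ y

lemma mono_core (hneg : ∀ u ∈ Set.Ioo (-1 : ℝ) 1, κ u ≤ 0)
    (int_g : ∀ y ∈ Icc (0:ℝ) 1, IntegrableOn (gg κ y) (Ioo (-1 : ℝ) 1))
    {a b δ : ℝ} (ha : 0 < a) (hab : a < b) (hsub : Icc a b ⊆ Ioo (-1 : ℝ) 1)
    (hδ : 0 < δ) (hnegI : ∀ u ∈ Icc a b, κ u ≤ -δ)
    {y1 y2 : ℝ} (hy1 : y1 ∈ Icc (0:ℝ) 1) (hy2 : y2 ∈ Icc (0:ℝ) 1) (h12 : y1 < y2) :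
    (∫ u in Ioo (-1:ℝ) 1, gg κ y2 u) < ∫ u in Ioo (-1:ℝ) 1, gg κ y1 u := by
  have hint1 := int_g y1 hy1
  have hint2 := int_g y2 hy2
  have key : 0 < ∫ u in Ioo (-1:ℝ) 1, (gg κ y1 u - gg κ y2 u) := by
    refine integral_pos_of hab hsub (hint1.sub hint2) ?_
      (c := a^2*δ*(y2-y1)) (mul_pos (mul_pos (pow_pos ha 2) hδ) (sub_pos.2 h12)) ?_
    · intro u hu
      obtain ⟨h1, h21, -⟩ := denoms hy1.1 hy1.2 hu
      obtain ⟨-, h22, -⟩ := denoms hy2.1 hy2.2 hu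
      have hD1 : 0 < 1 - y1*u^2 := lt_of_lt_of_le h1 h21
      have hD2 : 0 < 1 - y2*u^2 := lt_of_lt_of_le h1 h22
      rw [gg, gg, div_sub_div _ _ hD1.ne' hD2.ne']
      apply div_nonneg _ (mul_pos hD1 hD2).le
      have hk := hneg u hu
      have : y1*u^2*κ u*(1-y2*u^2) - (1-y1*u^2)*(y2*u^2*κ u) = u^2*(-κ u)*(y2-y1) := by ring
      rw [this]
      exact mul_nonneg (mul_nonneg (sq_nonneg u) (by linarith)) (by linarith)
    · intro u hu
      have huI := hsub hu
      obtain ⟨h1, h21, h31⟩ := denoms hy1.1 hy1.2 huI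
      obtain ⟨-, h22, h32⟩ := denoms hy2.1 hy2.2 huI
      have hD1 : 0 < 1 - y1*u^2 := lt_of_lt_of_le h1 h21
      have hD2 : 0 < 1 - y2*u^2 := lt_of_lt_of_le h1 h22
      have hu2 : a^2 ≤ u^2 := by nlinarith [hu.1, hu.2]
      have hk : κ u ≤ -δ := hnegI u hu
      rw [gg, gg, div_sub_div _ _ hD1.ne' hD2.ne']
      refine le_div_of (mul_pos hD1 hD2) (by nlinarith)
        (mul_pos (mul_pos (pow_pos ha 2) hδ) (sub_pos.2 h12)).le ?_
      have h' : y1*u^2*κ u*(1-y2*u^2) - (1-y1*u^2)*(y2*u^2*κ u) = u^2*(-κ u)*(y2-y1) := by ring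
      rw [h']
      have : a^2*δ ≤ u^2*(-κ u) := by nlinarith
      nlinarith
  rw [integral_sub hint1 hint2] at key
  linarith

lemma lemA_core (hneg : ∀ u ∈ Set.Ioo (-1 : ℝ) 1, κ u ≤ 0)
    (int_g : ∀ y ∈ Icc (0:ℝ) 1, IntegrableOn (gg κ y) (Ioo (-1 : ℝ) 1))
    {a b δ : ℝ} (ha : 0 < a) (hab : a < b) (hsub : Icc a b ⊆ Ioo (-1 : ℝ) 1)
    (hδ : 0 < δ) (hnegI : ∀ u ∈ Icc a b, κ u ≤ -δ)
    {y : ℝ} (hy : y ∈ Ioo (0:ℝ) 1) :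
    OmegaFn κ y < y * OmegaFn κ 1 := by
  have hyI : y ∈ Icc (0:ℝ) 1 := ⟨hy.1.le, hy.2.le⟩
  have hint1 := int_g y hyI
  have hint2 := (int_g 1 ⟨zero_le_one, le_rfl⟩).const_mul y
  have key : 0 < ∫ u in Ioo (-1:ℝ) 1, (gg κ y u - y * gg κ 1 u) := by
    refine integral_pos_of hab hsub (hint1.sub hint2) ?_ (c := y*(1-y)*a^4*δ)
      (mul_pos (mul_pos (mul_pos hy.1 (by linarith [hy.2])) (pow_pos ha 4)) hδ) ?_
    · intro u hu
      obtain ⟨h1, h2, h3⟩ := denoms hyI.1 hyI.2 hu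
      have hD : 0 < 1 - y*u^2 := lt_of_lt_of_le h1 h2
      have hk := hneg u hu
      have hform : gg κ y u - y * gg κ 1 u
          = y*(1-y)*u^4*(-κ u) / ((1-y*u^2)*(1-u^2)) := by
        rw [gg, gg]
        simp only [one_mul]
        rw [← mul_div_assoc, div_sub_div _ _ hD.ne' h1.ne']
        congr 1
        ring
      rw [hform]
      refine div_nonneg ?_ (mul_pos hD h1).le
      have : 0 ≤ y*(1-y) := by nlinarith [hy.1, hy.2]
      nlinarith [pow_nonneg (sq_nonneg u) 2, sq_nonneg (u^2), mul_nonneg this (sq_nonneg (u^2))]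
    · intro u hu
      have huI := hsub hu
      obtain ⟨h1, h2, h3⟩ := denoms hyI.1 hyI.2 huI
      have hD : 0 < 1 - y*u^2 := lt_of_lt_of_le h1 h2
      have hk2 : δ ≤ -κ u := by linarith [hnegI u hu]
      have hu2 : a^2 ≤ u^2 := by nlinarith [hu.1, hu.2]
      have hu4 : a^4 ≤ u^4 := by nlinarith [mul_le_mul hu2 hu2 (sq_nonneg a) (sq_nonneg u)]
      have hform : gg κ y u - y * gg κ 1 u
          = y*(1-y)*u^4*(-κ u) / ((1-y*u^2)*(1-u^2)) := by
        rw [gg, gg]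
        simp only [one_mul]
        rw [← mul_div_assoc, div_sub_div _ _ hD.ne' h1.ne']
        congr 1
        ring
      rw [hform]
      refine le_div_of (mul_pos hD h1) (by nlinarith [sq_nonneg u]) ?_ ?_
      · exact (mul_pos (mul_pos (mul_pos hy.1 (by linarith [hy.2])) (pow_pos ha 4)) hδ).le
      · have hbig : a^4*δ ≤ u^4*(-κ u) := by
          nlinarith [mul_le_mul hu4 hk2 hδ.le (by positivity : (0:ℝ) ≤ u^4)]
        have hyy : 0 ≤ y*(1-y) := by nlinarith [hy.1, hy.2]
        calc y*(1-y)*a^4*δ = y*(1-y)*(a^4*δ) := by ring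
          _ ≤ y*(1-y)*(u^4*(-κ u)) := mul_le_mul_of_nonneg_left hbig hyy
          _ = y*(1-y)*u^4*(-κ u) := by ring
  rw [integral_sub hint1 hint2, integral_const_mul] at key
  rw [omega_eq, omega_eq]
  linarith

lemma lemB_core (hneg : ∀ u ∈ Set.Ioo (-1 : ℝ) 1, κ u ≤ 0)
    (int_g : ∀ y ∈ Icc (0:ℝ) 1, IntegrableOn (gg κ y) (Ioo (-1 : ℝ) 1))
    (int_u2k : IntegrableOn (fun u => u ^ 2 * κ u) (Ioo (-1 : ℝ) 1))
    {a b δ : ℝ} (ha : 0 < a) (hab : a < b) (hsub : Icc a b ⊆ Ioo (-1 : ℝ) 1)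
    (hδ : 0 < δ) (hnegI : ∀ u ∈ Icc a b, κ u ≤ -δ)
    {y : ℝ} (hy : y ∈ Ioc (0:ℝ) 1) :
    y * tau0Sq κ < OmegaFn κ y := by
  have hyI : y ∈ Icc (0:ℝ) 1 := ⟨hy.1.le, hy.2⟩
  have hint1 := int_u2k.const_mul y
  have hint2 := int_g y hyI
  have key : 0 < ∫ u in Ioo (-1:ℝ) 1, (y * (u^2 * κ u) - gg κ y u) := by
    refine integral_pos_of hab hsub (hint1.sub hint2) ?_ (c := y^2*a^4*δ)
      (mul_pos (mul_pos (pow_pos hy.1 2) (pow_pos ha 4)) hδ) ?_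
    · intro u hu
      obtain ⟨h1, h2, h3⟩ := denoms hyI.1 hyI.2 hu
      have hD : 0 < 1 - y*u^2 := lt_of_lt_of_le h1 h2
      have hk := hneg u hu
      have hform : y * (u^2 * κ u) - gg κ y u = y^2*u^4*(-κ u) / (1-y*u^2) := by
        rw [gg, sub_div' hD.ne']
        congr 1
        ring
      rw [hform]
      refine div_nonneg ?_ hD.le
      nlinarith [sq_nonneg (y*u^2), mul_nonneg (sq_nonneg (y*u^2)) (neg_nonneg.2 hk)]
    · intro u hu
      have huI := hsub hu
      obtain ⟨h1, h2, h3⟩ := denoms hyI.1 hyI.2 huI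
      have hD : 0 < 1 - y*u^2 := lt_of_lt_of_le h1 h2
      have hk2 : δ ≤ -κ u := by linarith [hnegI u hu]
      have hu2 : a^2 ≤ u^2 := by nlinarith [hu.1, hu.2]
      have hu4 : a^4 ≤ u^4 := by nlinarith [mul_le_mul hu2 hu2 (sq_nonneg a) (sq_nonneg u)]
      have hform : y * (u^2 * κ u) - gg κ y u = y^2*u^4*(-κ u) / (1-y*u^2) := by
        rw [gg, sub_div' hD.ne']
        congr 1
        ring
      rw [hform]
      refine le_div_of hD h3
        (mul_pos (mul_pos (pow_pos hy.1 2) (pow_pos ha 4)) hδ).le ?_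
      have hbig : a^4*δ ≤ u^4*(-κ u) := by
        nlinarith [mul_le_mul hu4 hk2 hδ.le (by positivity : (0:ℝ) ≤ u^4)]
      calc y^2*a^4*δ = y^2*(a^4*δ) := by ring
        _ ≤ y^2*(u^4*(-κ u)) := mul_le_mul_of_nonneg_left hbig (sq_nonneg y)
        _ = y^2*u^4*(-κ u) := by ring
  rw [integral_sub hint1 hint2, integral_const_mul] at key
  rw [omega_eq, tau0_eqIoo]
  linarith

lemma lemC_core (hneg : ∀ u ∈ Set.Ioo (-1 : ℝ) 1, κ u ≤ 0)
    (int_g : ∀ y ∈ Icc (0:ℝ) 1, IntegrableOn (gg κ y) (Ioo (-1 : ℝ) 1))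
    (int_u2k : IntegrableOn (fun u => u ^ 2 * κ u) (Ioo (-1 : ℝ) 1))
    {a b δ : ℝ} (ha : 0 < a) (hab : a < b) (hsub : Icc a b ⊆ Ioo (-1 : ℝ) 1)
    (hδ : 0 < δ) (hnegI : ∀ u ∈ Icc a b, κ u ≤ -δ)
    {y : ℝ} (hy : y ∈ Ioo (0:ℝ) 1) :
    (1 - y) * OmegaFn κ y < y * tau0Sq κ := by
  have hyI : y ∈ Icc (0:ℝ) 1 := ⟨hy.1.le, hy.2.le⟩
  have hb1 : b < 1 := (hsub ⟨hab.le, le_rfl⟩).2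
  have hint1 := (int_g y hyI).const_mul (1 - y)
  have hint2 := int_u2k.const_mul y
  have key : 0 < ∫ u in Ioo (-1:ℝ) 1, ((1 - y) * gg κ y u - y * (u^2 * κ u)) := by
    refine integral_pos_of hab hsub (hint1.sub hint2) ?_ (c := y^2*a^2*((1-b^2)*δ))
      (mul_pos (mul_pos (pow_pos hy.1 2) (pow_pos ha 2)) (mul_pos (by nlinarith) hδ)) ?_
    · intro u hu
      obtain ⟨h1, h2, h3⟩ := denoms hyI.1 hyI.2 hu
      have hD : 0 < 1 - y*u^2 := lt_of_lt_of_le h1 h2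
      have hk := hneg u hu
      have hform : (1 - y) * gg κ y u - y * (u^2 * κ u)
          = y^2*u^2*((1-u^2)*(-κ u)) / (1-y*u^2) := by
        rw [gg, ← mul_div_assoc, div_sub' hD.ne']
        congr 1
        ring
      rw [hform]
      refine div_nonneg ?_ hD.le
      have : 0 ≤ (1-u^2)*(-κ u) := mul_nonneg h1.le (by linarith)
      positivity
    · intro u hu
      have huI := hsub hu
      obtain ⟨h1, h2, h3⟩ := denoms hyI.1 hyI.2 huI
      have hD : 0 < 1 - y*u^2 := lt_of_lt_of_le h1 h2
      have hk2 : δ ≤ -κ u := by linarith [hnegI u hu]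
      have hu2 : a^2 ≤ u^2 := by nlinarith [hu.1, hu.2]
      have hub2 : 1 - b^2 ≤ 1 - u^2 := by nlinarith [hu.1, hu.2]
      have hform : (1 - y) * gg κ y u - y * (u^2 * κ u)
          = y^2*u^2*((1-u^2)*(-κ u)) / (1-y*u^2) := by
        rw [gg, ← mul_div_assoc, div_sub' hD.ne']
        congr 1
        ring
      rw [hform]
      refine le_div_of hD h3
        (mul_pos (mul_pos (pow_pos hy.1 2) (pow_pos ha 2)) (mul_pos (by nlinarith) hδ)).le ?_
      have i1 : (1-b^2)*δ ≤ (1-u^2)*(-κ u) :=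
        mul_le_mul hub2 hk2 hδ.le (by linarith)
      have i2 : a^2*((1-b^2)*δ) ≤ u^2*((1-u^2)*(-κ u)) :=
        mul_le_mul hu2 i1 (mul_nonneg (by nlinarith) hδ.le) (sq_nonneg u)
      calc y^2*a^2*((1-b^2)*δ) = y^2*(a^2*((1-b^2)*δ)) := by ring
        _ ≤ y^2*(u^2*((1-u^2)*(-κ u))) := mul_le_mul_of_nonneg_left i2 (sq_nonneg y)
        _ = y^2*u^2*((1-u^2)*(-κ u)) := by ring
  rw [integral_sub hint1 hint2, integral_const_mul, integral_const_mul] at key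
  rw [omega_eq, tau0_eqIoo]
  linarith

end Stmt12Aux

/-- existence, uniqueness and range of the electric dispersion relation
`τ = τ*(r)` (Langmuir waves). -/
theorem stmt12
    (C α : ℝ) (hα : 1 < α) (κ : ℝ → ℝ)
    (hcont : ContinuousOn κ (Set.Ioo (-1 : ℝ) 1))
    (hneg : ∀ u ∈ Set.Ioo (-1 : ℝ) 1, κ u ≤ 0)
    (hne : ∃ u₀ ∈ Set.Ioo (-1 : ℝ) 1, κ u₀ < 0)
    (heven : ∀ u ∈ Set.Ioo (-1 : ℝ) 1, κ (-u) = κ u)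
    (hbound : ∀ u ∈ Set.Ioo (-1 : ℝ) 1, |κ u| ≤ C * (1 - u ^ 2) ^ α) :
    (ContinuousOn (OmegaFn κ) (Set.Icc 0 1) ∧
      StrictMonoOn (OmegaFn κ) (Set.Icc 0 1) ∧ OmegaFn κ 0 = 0) ∧
    (∀ r : ℝ, 0 < r → r ≤ kappa0 κ →
      (r ≤ tauStar κ r ∧ OmegaFn κ (r ^ 2 / tauStar κ r ^ 2) = r ^ 2) ∧
      (∀ τ : ℝ, r ≤ τ → OmegaFn κ (r ^ 2 / τ ^ 2) = r ^ 2 → τ = tauStar κ r)) ∧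
    (∀ r : ℝ, kappa0 κ < r →
      ¬∃ τ : ℝ, r ≤ τ ∧ OmegaFn κ (r ^ 2 / τ ^ 2) = r ^ 2) ∧
    (tauStar κ (kappa0 κ) = kappa0 κ ∧
      ∀ r : ℝ, 0 < r → r < kappa0 κ →
        Real.sqrt (tau0Sq κ) < tauStar κ r ∧ tauStar κ r < kappa0 κ ∧
        r < tauStar κ r ∧ tauStar κ r < Real.sqrt (tau0Sq κ + r ^ 2)) := by
  classical
  have hC : 0 < C := Stmt12Aux.C_pos hne hbound
  obtain ⟨a, b, δ, ha, hab, hsub, hδ, hnegI⟩ := Stmt12Aux.exists_neg_interval hcont hne heven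
  have hintg : ∀ y ∈ Set.Icc (0:ℝ) 1, IntegrableOn (Stmt12Aux.gg κ y) (Set.Ioo (-1:ℝ) 1) :=
    fun y hy => Stmt12Aux.int_g hα hC.le hcont hbound hy
  have hintu : IntegrableOn (fun u => u ^ 2 * κ u) (Set.Ioo (-1:ℝ) 1) :=
    Stmt12Aux.int_u2k hα hC.le hcont hbound
  have hmono : StrictMonoOn (OmegaFn κ) (Set.Icc 0 1) := by
    intro y1 hy1 y2 hy2 h12
    rw [Stmt12Aux.omega_eq, Stmt12Aux.omega_eq]
    have := Stmt12Aux.mono_core hneg hintg ha hab hsub hδ hnegI hy1 hy2 h12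
    linarith
  have hcontΩ : ContinuousOn (OmegaFn κ) (Set.Icc 0 1) :=
    Stmt12Aux.omega_cont hα (fun y hy => Stmt12Aux.meas_g hcont hy)
      (fun y hy u hu => Stmt12Aux.bound_ptwise hC.le hbound hy hu)
  have hΩ0 : OmegaFn κ 0 = 0 := Stmt12Aux.omega_zero κ
  have hΩ1 : 0 < OmegaFn κ 1 := by
    have := hmono (Set.left_mem_Icc.2 zero_le_one) (Set.right_mem_Icc.2 zero_le_one) zero_lt_one
    linarith [hΩ0]
  have hκsq : kappa0 κ ^ 2 = OmegaFn κ 1 := Real.sq_sqrt hΩ1.le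
  have hκpos : 0 < kappa0 κ := Real.sqrt_pos.2 hΩ1
  have hinj := hmono.injOn
  have hτ0 : 0 ≤ tau0Sq κ := Stmt12Aux.tau0_nonneg hneg
  have hY : ∀ r : ℝ, 0 < r → r ≤ kappa0 κ →
      Function.invFunOn (OmegaFn κ) (Set.Icc 0 1) (r ^ 2) ∈ Set.Icc (0:ℝ) 1 ∧
      OmegaFn κ (Function.invFunOn (OmegaFn κ) (Set.Icc 0 1) (r ^ 2)) = r ^ 2 ∧
      0 < Function.invFunOn (OmegaFn κ) (Set.Icc 0 1) (r ^ 2) := by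
    intro r hr hrκ
    have hr2 : r ^ 2 ≤ OmegaFn κ 1 := by
      rw [← hκsq]; exact pow_le_pow_left₀ hr.le hrκ 2
    have hex : ∃ y ∈ Set.Icc (0:ℝ) 1, OmegaFn κ y = r ^ 2 := by
      have hsurj := intermediate_value_Icc zero_le_one hcontΩ
      have hmem : r ^ 2 ∈ Set.Icc (OmegaFn κ 0) (OmegaFn κ 1) := by
        rw [hΩ0]; exact ⟨sq_nonneg r, hr2⟩
      obtain ⟨y, hy, hyeq⟩ := hsurj hmem
      exact ⟨y, hy, hyeq⟩
    have h1 := Function.invFunOn_eq hex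
    have h2 := Function.invFunOn_mem hex
    refine ⟨h2, h1, lt_of_le_of_ne h2.1 fun h0 => ?_⟩
    rw [← h0, hΩ0] at h1
    nlinarith
  refine ⟨⟨hcontΩ, hmono, hΩ0⟩, ?_, ?_, ?_, ?_⟩
  · -- part (ii)
    intro r hr hrκ
    obtain ⟨hYmem, hYeq, hYpos⟩ := hY r hr hrκ
    set y := Function.invFunOn (OmegaFn κ) (Set.Icc 0 1) (r ^ 2) with hydef
    have hτdef : tauStar κ r = Real.sqrt (r ^ 2 / y) := by rw [tauStar]
    have hτsq : tauStar κ r ^ 2 = r ^ 2 / y := by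
      rw [hτdef, Real.sq_sqrt (div_nonneg (sq_nonneg r) hYpos.le)]
    have hdiv : r ^ 2 / tauStar κ r ^ 2 = y := by
      rw [hτsq]
      field_simp [hr.ne', hYpos.ne']
    constructor
    · constructor
      · have h1 : r ^ 2 ≤ r ^ 2 / y := by
          rw [le_div_iff₀ hYpos]; nlinarith [hYmem.2, sq_nonneg r]
        calc r = Real.sqrt (r ^ 2) := (Real.sqrt_sq hr.le).symm
          _ ≤ tauStar κ r := by rw [hτdef]; exact Real.sqrt_le_sqrt h1
      · rw [hdiv]; exact hYeq
    · intro τ hτr hτeq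
      have hτpos : 0 < τ := lt_of_lt_of_le hr hτr
      have hmem : r ^ 2 / τ ^ 2 ∈ Set.Icc (0:ℝ) 1 := by
        constructor
        · positivity
        · rw [div_le_one (by positivity)]
          nlinarith
      have heqy : r ^ 2 / τ ^ 2 = y := hinj hmem hYmem (by rw [hτeq, hYeq])
      have hmul : y * τ ^ 2 = r ^ 2 := by
        rw [← heqy]; field_simp
      have hτ2 : τ ^ 2 = r ^ 2 / y := by
        rw [← hmul]; field_simp [hYpos.ne']
      calc τ = Real.sqrt (τ ^ 2) := (Real.sqrt_sq hτpos.le).symm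
        _ = tauStar κ r := by rw [hτ2, hτdef]
  · -- part (iii)
    rintro r hrκ ⟨τ, hτr, hτeq⟩
    have hr : 0 < r := lt_of_le_of_lt (Real.sqrt_nonneg _) hrκ
    have hτpos : 0 < τ := lt_of_lt_of_le hr hτr
    have hmem : r ^ 2 / τ ^ 2 ∈ Set.Icc (0:ℝ) 1 := by
      constructor
      · positivity
      · rw [div_le_one (by positivity)]
        nlinarith
    have hle : OmegaFn κ (r ^ 2 / τ ^ 2) ≤ OmegaFn κ 1 :=
      hmono.monotoneOn hmem (Set.right_mem_Icc.2 zero_le_one) hmem.2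
    have hlt : OmegaFn κ 1 < r ^ 2 := by
      rw [← hκsq]; nlinarith [hκpos]
    rw [hτeq] at hle
    linarith
  · -- part (iv) first
    obtain ⟨hYmem, hYeq, hYpos⟩ := hY (kappa0 κ) hκpos le_rfl
    have hy1 : Function.invFunOn (OmegaFn κ) (Set.Icc 0 1) (kappa0 κ ^ 2) = 1 :=
      hinj hYmem (Set.right_mem_Icc.2 zero_le_one) (by rw [hYeq, hκsq])
    rw [tauStar, hy1, div_one, Real.sqrt_sq hκpos.le]
  · -- part (iv) second
    intro r hr hrκ
    obtain ⟨hYmem, hYeq, hYpos⟩ := hY r hr hrκ.le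
    set y := Function.invFunOn (OmegaFn κ) (Set.Icc 0 1) (r ^ 2) with hydef
    have hτdef : tauStar κ r = Real.sqrt (r ^ 2 / y) := by rw [tauStar]
    have hYlt1 : y < 1 := by
      refine lt_of_le_of_ne hYmem.2 fun h1 => ?_
      rw [h1] at hYeq
      nlinarith [hκsq, hrκ, hκpos, hr]
    have hyIoo : y ∈ Set.Ioo (0:ℝ) 1 := ⟨hYpos, hYlt1⟩
    refine ⟨?_, ?_, ?_, ?_⟩
    · have hB := Stmt12Aux.lemB_core hneg hintg hintu ha hab hsub hδ hnegI
        (y := y) ⟨hYpos, hYmem.2⟩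
      rw [hYeq] at hB
      have h2 : tau0Sq κ < r ^ 2 / y := by
        rw [lt_div_iff₀ hYpos]; linarith
      rw [hτdef]
      exact Real.sqrt_lt_sqrt hτ0 h2
    · have hA := Stmt12Aux.lemA_core hneg hintg ha hab hsub hδ hnegI hyIoo
      rw [hYeq] at hA
      have h2 : r ^ 2 / y < OmegaFn κ 1 := by
        rw [div_lt_iff₀ hYpos]; linarith
      rw [hτdef]
      calc Real.sqrt (r ^ 2 / y) < Real.sqrt (OmegaFn κ 1) :=
            Real.sqrt_lt_sqrt (div_nonneg (sq_nonneg r) hYpos.le) h2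
        _ = kappa0 κ := rfl
    · have h2 : r ^ 2 < r ^ 2 / y := by
        rw [lt_div_iff₀ hYpos]; nlinarith [pow_pos hr 2]
      rw [hτdef]
      calc r = Real.sqrt (r ^ 2) := (Real.sqrt_sq hr.le).symm
        _ < Real.sqrt (r ^ 2 / y) := Real.sqrt_lt_sqrt (sq_nonneg r) h2
    · have hCc := Stmt12Aux.lemC_core hneg hintg hintu ha hab hsub hδ hnegI hyIoo
      rw [hYeq] at hCc
      have h2 : r ^ 2 / y < tau0Sq κ + r ^ 2 := by
        rw [div_lt_iff₀ hYpos]; nlinarith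
      rw [hτdef]
      exact Real.sqrt_lt_sqrt (div_nonneg (sq_nonneg r) hYpos.le) h2
end
end

section
/- Let g⁰ : ℝ³ × ℝ³ → ℝ be measurable, and suppose that the function x ↦ sup_{v ∈ ℝ³} ⟨v⟩⁵ |g⁰(x,v)| is integrable on ℝ³. Define the macroscopic density of the relativistic free transport flow S(t,x) := ∫_{ℝ³} g⁰(x - t v̂, v) dv. Then there is a universal constant C such that for every t > 0 and every x ∈ ℝ³: |S(t,x)| ≤ C t^{-3} ∫_{ℝ³} sup_{v ∈ ℝ³} ⟨v⟩⁵ |g⁰(y,v)| dy. -/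
open MeasureTheory Real

noncomputable section

lemma jap_pos (v : E3) : 0 < jap v := Real.sqrt_pos.2 (by positivity)
lemma jap_sq (v : E3) : jap v ^ 2 = 1 + ‖v‖ ^ 2 := Real.sq_sqrt (by positivity)

def japD (v : E3) : E3 →L[ℝ] ℝ := (jap v)⁻¹ • (innerSL ℝ v)

lemma hasFDerivAt_jap (v : E3) : HasFDerivAt jap (japD v) v := by
  have h1 : HasFDerivAt (fun w : E3 => 1 + ‖w‖ ^ 2) (2 • (innerSL ℝ v)) v := by
    simpa using ((hasStrictFDerivAt_norm_sq v).hasFDerivAt.const_add 1)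
  have h2 := h1.sqrt (by positivity)
  refine h2.congr_fderiv ?_
  ext w
  simp only [japD, jap, ContinuousLinearMap.coe_smul', Pi.smul_apply, smul_eq_mul,
    ContinuousLinearMap.smul_apply]
  have : Real.sqrt (1 + ‖v‖^2) ≠ 0 := ne_of_gt (jap_pos v)
  field_simp
  simp [nsmul_eq_mul]

def vhatD (v : E3) : E3 →L[ℝ] E3 :=
  (jap v)⁻¹ • ContinuousLinearMap.id ℝ E3 + ((-(jap v ^ 2)⁻¹) • japD v).smulRight v

lemma hasFDerivAt_vhat (v : E3) : HasFDerivAt vhat (vhatD v) v := by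
  have hinv : HasFDerivAt (fun w : E3 => (jap w)⁻¹) ((-(jap v ^ 2)⁻¹) • japD v) v := by
    have := (hasDerivAt_inv (ne_of_gt (jap_pos v))).comp_hasFDerivAt v (hasFDerivAt_jap v)
    exact this
  exact hinv.smul (hasFDerivAt_id v)

lemma norm_sq_eq (v : E3) : ‖v‖ ^ 2 = v 0 ^ 2 + v 1 ^ 2 + v 2 ^ 2 := by
  rw [EuclideanSpace.norm_eq, Real.sq_sqrt (by positivity)]
  simp [Fin.sum_univ_three, sq_abs]

lemma det_vhatD (v : E3) : (vhatD v).det = (jap v ^ 5)⁻¹ := by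
  have hb := (EuclideanSpace.basisFun (Fin 3) ℝ).toBasis
  rw [ContinuousLinearMap.det, ← LinearMap.det_toMatrix (EuclideanSpace.basisFun (Fin 3) ℝ).toBasis]
  have hM : ∀ i j : Fin 3, LinearMap.toMatrix (EuclideanSpace.basisFun (Fin 3) ℝ).toBasis
      (EuclideanSpace.basisFun (Fin 3) ℝ).toBasis (vhatD v) i j
      = (jap v)⁻¹ * (if i = j then 1 else 0) - (jap v ^ 3)⁻¹ * (v i * v j) := by
    intro i j
    rw [LinearMap.toMatrix_apply]
    simp [vhatD, japD, EuclideanSpace.basisFun_apply, PiLp.inner_apply,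
      EuclideanSpace.single_apply, RCLike.inner_apply]
    all_goals ring
  rw [Matrix.det_fin_three]
  simp only [hM]
  have hj := jap_sq v
  have hn := norm_sq_eq v
  have h0 : jap v ≠ 0 := ne_of_gt (jap_pos v)
  norm_num
  simp only [show ((1:Fin 3) = 2) = False by decide, show ((2:Fin 3) = 1) = False by decide,
    show ((2:Fin 3) = 0) = False by decide, show ((0:Fin 3) = 2) = False by decide, if_false]
  have hs : v 0 ^ 2 + v 1 ^ 2 + v 2 ^ 2 = jap v ^ 2 - 1 := by rw [← hn]; linarith
  norm_num
  trans ((jap v)⁻¹ ^ 3 - (jap v)⁻¹ ^ 2 * (jap v ^ 3)⁻¹ * (v 0 ^ 2 + v 1 ^ 2 + v 2 ^ 2))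
  · ring
  rw [hs]
  field_simp
  ring

lemma vhat_injective : Function.Injective vhat := by
  intro v w h
  have hv := jap_pos v
  have hw := jap_pos w
  have h1 : (jap v)⁻¹ * ‖v‖ = (jap w)⁻¹ * ‖w‖ := by
    have := congrArg norm h
    rw [vhat, vhat, norm_smul, norm_smul] at this
    simpa [abs_of_pos hv, abs_of_pos hw] using this
  have h2 : ‖v‖ * jap w = ‖w‖ * jap v := by
    field_simp at h1
    linarith
  have h3 : ‖v‖ ^ 2 * (jap w) ^ 2 = ‖w‖ ^ 2 * (jap v) ^ 2 := by
    have := congrArg (fun r => r ^ 2) h2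
    simpa [mul_pow] using this
  rw [jap_sq, jap_sq] at h3
  have h4 : ‖v‖ ^ 2 = ‖w‖ ^ 2 := by nlinarith
  have h5 : jap v = jap w := by rw [jap, jap, h4]
  have := congrArg (fun u : E3 => jap v • u) h
  simp only [vhat, h5, smul_smul] at this
  rwa [mul_inv_cancel₀ (ne_of_gt hw), one_smul, one_smul] at this

/-- `L^∞` dispersive decay of the macroscopic density
`S(t,x) = ∫ g⁰(x - t v̂, v) dv` of the relativistic free transport flow. -/
theorem stmt17 :
    ∃ C : ℝ, ∀ g : E3 → E3 → ℝ,
      Measurable (Function.uncurry g) →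
      (∀ x : E3, BddAbove (Set.range fun v : E3 => jap v ^ 5 * |g x v|)) →
      Integrable (fun x : E3 => ⨆ v : E3, jap v ^ 5 * |g x v|) →
      ∀ (t : ℝ) (x : E3), 0 < t →
        |∫ v : E3, g (x - t • vhat v) v|
          ≤ C * t ^ (-(3 : ℝ)) * ∫ y : E3, ⨆ v : E3, jap v ^ 5 * |g y v| := by
  refine ⟨1, ?_⟩
  intro g hg hbdd hint t x ht
  set M : E3 → ℝ := fun y => ⨆ v : E3, jap v ^ 5 * |g y v| with hMdef
  set φ : E3 → E3 := fun v => x - t • vhat v with hφdef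
  have hφd : ∀ v : E3, HasFDerivAt φ (-(t • vhatD v)) v := fun v =>
    ((hasFDerivAt_vhat v).const_smul t).const_sub x
  have hφc : Continuous φ := continuous_iff_continuousAt.2 fun v => (hφd v).continuousAt
  have hφinj : Set.InjOn φ Set.univ := by
    intro v _ w _ h
    have h1 : t • vhat v = t • vhat w := sub_right_inj.mp h
    exact vhat_injective (smul_right_injective E3 (ne_of_gt ht) h1)
  have hM0 : ∀ y, 0 ≤ M y := fun y =>
    le_trans (mul_nonneg (pow_nonneg (jap_pos 0).le 5) (abs_nonneg _)) (le_ciSup (hbdd y) (0 : E3))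
  have hpt : ∀ v : E3, |g (φ v) v| ≤ (jap v ^ 5)⁻¹ * M (φ v) := by
    intro v
    have hp : (0:ℝ) < jap v ^ 5 := pow_pos (jap_pos v) 5
    have h1 : jap v ^ 5 * |g (φ v) v| ≤ M (φ v) := le_ciSup (hbdd (φ v)) v
    calc |g (φ v) v| = (jap v ^ 5)⁻¹ * (jap v ^ 5 * |g (φ v) v|) := by
          rw [← mul_assoc, inv_mul_cancel₀ (ne_of_gt hp), one_mul]
      _ ≤ (jap v ^ 5)⁻¹ * M (φ v) :=
          mul_le_mul_of_nonneg_left h1 (inv_nonneg.2 hp.le)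
  have hgm : Measurable fun v : E3 => g (φ v) v :=
    hg.comp (hφc.measurable.prodMk measurable_id)
  have hdet : ∀ v : E3, |(-(t • vhatD v) : E3 →L[ℝ] E3).det| = t ^ 3 * (jap v ^ 5)⁻¹ := by
    intro v
    have hc : ((-(t • vhatD v) : E3 →L[ℝ] E3) : E3 →ₗ[ℝ] E3)
        = (-t) • ((vhatD v : E3 →L[ℝ] E3) : E3 →ₗ[ℝ] E3) := by
      ext w; simp [neg_smul]
    have : (-(t • vhatD v) : E3 →L[ℝ] E3).det = (-t) ^ 3 * (jap v ^ 5)⁻¹ := by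
      rw [ContinuousLinearMap.det, hc, LinearMap.det_smul, finrank_euclideanSpace_fin,
        ← det_vhatD v, ContinuousLinearMap.det]
    rw [this, abs_mul, abs_pow, abs_neg, abs_of_pos ht,
      abs_of_pos (inv_pos.2 (pow_pos (jap_pos v) 5))]
  have hptw : ∀ v : E3, (jap v ^ 5)⁻¹ * M (φ v)
      = t⁻¹ ^ 3 * (|(-(t • vhatD v) : E3 →L[ℝ] E3).det| * M (φ v)) := by
    intro v
    rw [hdet v, inv_pow]
    field_simp
  have key : (∫⁻ v : E3, ENNReal.ofReal |g (φ v) v|)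
      ≤ ENNReal.ofReal (t⁻¹ ^ 3 * ∫ y : E3, M y) := by
    calc (∫⁻ v : E3, ENNReal.ofReal |g (φ v) v|)
        ≤ ∫⁻ v : E3, ENNReal.ofReal ((jap v ^ 5)⁻¹ * M (φ v)) :=
          lintegral_mono fun v => ENNReal.ofReal_le_ofReal (hpt v)
      _ = ∫⁻ v : E3, ENNReal.ofReal (t⁻¹ ^ 3) *
            (ENNReal.ofReal |(-(t • vhatD v) : E3 →L[ℝ] E3).det| * ENNReal.ofReal (M (φ v))) := by
          refine lintegral_congr fun v => ?_
          rw [hptw v, ENNReal.ofReal_mul (by positivity), ENNReal.ofReal_mul (by positivity)]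
      _ = ENNReal.ofReal (t⁻¹ ^ 3) * ∫⁻ v : E3,
            ENNReal.ofReal |(-(t • vhatD v) : E3 →L[ℝ] E3).det| * ENNReal.ofReal (M (φ v)) :=
          lintegral_const_mul' _ _ ENNReal.ofReal_ne_top
      _ = ENNReal.ofReal (t⁻¹ ^ 3) * ∫⁻ y in φ '' Set.univ, ENNReal.ofReal (M y) := by
          rw [lintegral_image_eq_lintegral_abs_det_fderiv_mul volume MeasurableSet.univ
            (fun v _ => (hφd v).hasFDerivWithinAt) hφinj (fun y => ENNReal.ofReal (M y)),
            setLIntegral_univ]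
      _ ≤ ENNReal.ofReal (t⁻¹ ^ 3) * ∫⁻ y : E3, ENNReal.ofReal (M y) :=
          mul_le_mul_right (setLIntegral_le_lintegral _ _) _
      _ = ENNReal.ofReal (t⁻¹ ^ 3 * ∫ y : E3, M y) := by
          rw [← ofReal_integral_eq_lintegral_ofReal hint (ae_of_all _ hM0),
            ← ENNReal.ofReal_mul (by positivity)]
  have habs : |∫ v : E3, g (φ v) v| ≤ t⁻¹ ^ 3 * ∫ y : E3, M y := by
    have h1 : |∫ v : E3, g (φ v) v| ≤ ∫ v : E3, |g (φ v) v| := by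
      simpa using norm_integral_le_integral_norm fun v : E3 => g (φ v) v
    have h2 : (∫ v : E3, |g (φ v) v|)
        = (∫⁻ v : E3, ENNReal.ofReal |g (φ v) v|).toReal :=
      integral_eq_lintegral_of_nonneg_ae (ae_of_all _ fun v => abs_nonneg _)
        (hgm.abs.aestronglyMeasurable)
    have h3 := ENNReal.toReal_mono ENNReal.ofReal_ne_top key
    have h4 : (0:ℝ) ≤ t⁻¹ ^ 3 * ∫ y : E3, M y := by
      have := integral_nonneg (μ := volume) (f := M) hM0
      positivity
    rw [ENNReal.toReal_ofReal h4] at h3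
    calc |∫ v : E3, g (φ v) v| ≤ ∫ v : E3, |g (φ v) v| := h1
      _ = _ := h2
      _ ≤ _ := h3
  have hrpow : t ^ (-(3:ℝ)) = t⁻¹ ^ 3 := by
    rw [Real.rpow_neg ht.le, inv_pow, ← Real.rpow_natCast t 3]
    norm_num
  rw [one_mul, hrpow]
  exact habs
end
end
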